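/- arXiv:2209.14198 — 4 statements merged into one kernel-verified Lean document; each statement's English description precedes it below -/
import Mathlib

section
/- For every n ≥ 3 and every integer ℓ satisfying either 2^(C(n,2)−1) ≤ ℓ ≤ 2^(C(n,2)−1) + 2^(2n−4) or 2^(C(n,2)) − 2^(2n−4) ≤ ℓ ≤ 2^(C(n,2)), where C(n,2) = n(n−1)/2, there exists a graph universal partial cycle (gupcycle) of length ℓ for the labeled graphs on vertex set {1,…,n}. -/
/-!
Record a window of `n` consecutive vertices, except the pair of its two endpoints, as a word
listing for each distance `δ ≤ n - 2` the adjacencies of the `n - δ` pairs at that distance. The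
windows at `x` and `x + 1` overlap, so these `2 ^ (C(n, 2) - 1)` words are the arcs of a product
of binary de Bruijn graphs. A closed walk through this graph in which every word occurs once or
twice is a gupcycle: the pairs at distance `δ ≤ n - 2` are read off the words, and the endpoint
pair of the window at `x` is a diamond edge if the word at `x` occurs once, and otherwise a
non-edge at its first and an edge at its second occurrence. A graph `H` is resolved exactly at
an occurrence of its own word, the endpoint pair of `H` choosing between two occurrences.

By Euler's theorem such a walk exists once the multiplicities are balanced. Multiplicity one is
balanced, since rotating each column of a word exchanges its two end overlaps. Words that are
2-periodic in every column shift to 2-periodic words with the two letters of each column swapped,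
so a swap-invariant set of such words, of any size `s ≤ 4 ^ (n - 2)`, has a balanced indicator.
Doubling such a set, or everything outside it, gives the lengths `2 ^ (C(n, 2) - 1) + s` and
`2 ^ C(n, 2) - s`.
-/

namespace Stmt2

/-- Position of the `a`-th vertex of the `n`-window starting at `i` in `Z_ℓ`. -/
def wpos {ℓ : ℕ} (i : Fin ℓ) {n : ℕ} (a : Fin n) : Fin ℓ :=
  ⟨(i.val + a.val) % ℓ, Nat.mod_lt _ i.pos⟩

/-- Cyclic distance between positions `a` and `b` in `Z_ℓ`. -/
def cyclicDist (ℓ a b : ℕ) : ℕ := min ((a + ℓ - b) % ℓ) ((b + ℓ - a) % ℓ)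

/-- `S` is a set of diamond edges lying inside the `n`-window starting at `i`. -/
def ValidS (n : ℕ) {ℓ : ℕ} (D : SimpleGraph (Fin ℓ)) (i : Fin ℓ)
    (S : Set (Sym2 (Fin ℓ))) : Prop :=
  ∀ e ∈ S, ∃ a b : Fin n, e = s(wpos i a, wpos i b) ∧ D.Adj (wpos i a) (wpos i b)

/-- The resolved `n`-window at `(i, S)` equals the graph `H` on `{1,…,n}`:
`a` and `b` are adjacent in `H` iff the corresponding pair of the cycle is an edge
or lies in `S`. -/
def Resolves (n : ℕ) {ℓ : ℕ} (E : SimpleGraph (Fin ℓ)) (i : Fin ℓ)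
    (S : Set (Sym2 (Fin ℓ))) (H : SimpleGraph (Fin n)) : Prop :=
  ∀ a b : Fin n, H.Adj a b ↔ (E.Adj (wpos i a) (wpos i b) ∨ s(wpos i a, wpos i b) ∈ S)

/-- A graph universal partial cycle of length `ℓ` for the labeled graphs on `{1,…,n}`:
a cyclically ordered partial graph on `Z_ℓ` (edge set `E`, diamond edge set `D`, the
remaining pairs being non-edges), with no edge or diamond edge at cyclic distance `≥ n`,
such that every simple graph `H` on `{1,…,n}` is the resolved `n`-window of exactly one
pair `(i, S)` with `i ∈ Z_ℓ` and `S` a subset of the diamond edges inside the window. -/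
def IsGupcycle (n ℓ : ℕ) (E D : SimpleGraph (Fin ℓ)) : Prop :=
  (∀ a b : Fin ℓ, ¬(E.Adj a b ∧ D.Adj a b)) ∧
  (∀ a b : Fin ℓ, E.Adj a b ∨ D.Adj a b → cyclicDist ℓ a.val b.val < n) ∧
  (∀ H : SimpleGraph (Fin n), ∃! p : Fin ℓ × Set (Sym2 (Fin ℓ)),
    ValidS n D p.1 p.2 ∧ Resolves n E p.1 p.2 H)

open Finset

section Euler

variable {α β : Type*} (tl hd : α → β)

inductive IsWalk : β → List α → β → Prop
  | nil (v : β) : IsWalk v [] v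
  | cons {a : α} {L : List α} {u : β} : IsWalk (hd a) L u → IsWalk (tl a) (a :: L) u

def Balanced [Fintype α] [DecidableEq β] (m : α → ℕ) : Prop :=
  ∀ c, ∑ a with tl a = c, m a = ∑ a with hd a = c, m a

variable {tl hd}

theorem sum_count_cons [Fintype α] [DecidableEq α] (p : α → Prop) [DecidablePred p] (a : α)
    (L : List α) :
    ∑ x with p x, (a :: L).count x = ∑ x with p x, L.count x + if p a then 1 else 0 := by
  simp [List.count_cons, sum_add_distrib, sum_ite_eq]

theorem exists_eq_add_ite [DecidableEq α] {r : α → ℕ} {a : α} (ha : r a ≠ 0) :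
    ∃ r' : α → ℕ, r = fun x => r' x + if x = a then 1 else 0 :=
  ⟨fun x => r x - if x = a then 1 else 0, funext fun x => by split_ifs <;> grind⟩

namespace IsWalk

theorem append {v u w : β} {L L' : List α} (h : IsWalk tl hd v L u)
    (h' : IsWalk tl hd u L' w) : IsWalk tl hd v (L ++ L') w := by
  induction h with
  | nil => exact h'
  | cons _ ih => exact cons (ih h')

theorem of_append {v w : β} {L L' : List α} (h : IsWalk tl hd v (L ++ L') w) :
    ∃ u, IsWalk tl hd v L u ∧ IsWalk tl hd u L' w := by
  induction L generalizing v with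
  | nil => exact ⟨v, nil v, h⟩
  | cons a L ih =>
    cases h with
    | cons h =>
      obtain ⟨u, h₁, h₂⟩ := ih h
      exact ⟨u, cons h₁, h₂⟩

theorem exists_perm_of_mem {v c : β} {L : List α} {e : α} (h : IsWalk tl hd v L v)
    (he : e ∈ L) (hc : c = tl e ∨ c = hd e) : ∃ L', L'.Perm L ∧ IsWalk tl hd c L' c := by
  obtain ⟨P, Q, rfl⟩ := List.append_of_mem he
  obtain ⟨u, hP, hQ⟩ := h.of_append
  cases hQ with
  | cons hQ =>
    rcases hc with rfl | rfl
    · exact ⟨e :: (Q ++ P), (List.perm_middle.trans (List.perm_append_comm.cons e)).symm,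
        cons (hQ.append hP)⟩
    · exact ⟨Q ++ P ++ [e], (List.perm_append_singleton e _).trans
        (List.perm_middle.trans (List.perm_append_comm.cons e)).symm,
        (hQ.append hP).append (cons (nil _))⟩

theorem eq_of_nil {v u : β} (h : IsWalk tl hd v [] u) : u = v := by
  generalize hL : ([] : List α) = L at h
  cases h with
  | nil => rfl
  | cons => simp at hL

theorem getElem_zero {v u : β} {L : List α} (h : IsWalk tl hd v L u) (hL : 0 < L.length) :
    tl L[0] = v := by
  cases h with
  | nil => simp at hL
  | cons => rfl

theorem hd_getElem {v u : β} {L : List α} (h : IsWalk tl hd v L u) (i : ℕ) (hi : i < L.length) :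
    hd L[i] = if hi' : i + 1 < L.length then tl L[i + 1] else u := by
  induction h generalizing i with
  | nil => simp at hi
  | @cons a L u h ih =>
    cases i with
    | zero =>
      rcases L with _ | ⟨b, L⟩
      · simpa using h.eq_of_nil.symm
      · have := h.getElem_zero (L := b :: L) (by simp)
        simp only [List.getElem_cons_zero] at this
        simp [this]
    | succ i => simpa using ih i (by simpa using hi)

variable [Fintype α] [DecidableEq α] [DecidableEq β]

theorem count_balance {v u : β} {L : List α} (h : IsWalk tl hd v L u) (c : β) :
    ∑ a with tl a = c, L.count a + (if c = u then 1 else 0) =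
      ∑ a with hd a = c, L.count a + (if c = v then 1 else 0) := by
  induction h with
  | nil => simp
  | @cons a L u h ih =>
    rw [sum_count_cons, sum_count_cons]
    split_ifs at ih ⊢ <;> grind

theorem balanced_count {v : β} {L : List α} (h : IsWalk tl hd v L v) :
    Balanced tl hd (L.count ·) :=
  fun c => by simpa using h.count_balance c

end IsWalk

variable [Fintype α] [DecidableEq β]

namespace Balanced

theorem add {f g : α → ℕ} (hf : Balanced tl hd f) (hg : Balanced tl hd g) :
    Balanced tl hd (f + g) :=
  fun c => by simp only [Pi.add_apply, sum_add_distrib, hf c, hg c]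

theorem of_add {f g : α → ℕ} (hfg : Balanced tl hd (f + g)) (hg : Balanced tl hd g) :
    Balanced tl hd f :=
  fun c => by
    have := hfg c
    simp only [Pi.add_apply, sum_add_distrib, hg c] at this
    omega

end Balanced

variable [DecidableEq α]

theorem Balanced.indicator_compl {U : Finset α} (h₁ : Balanced tl hd fun _ => 1)
    (hU : Balanced tl hd fun a => if a ∈ U then 1 else 0) :
    Balanced tl hd fun a => if a ∈ Uᶜ then 1 else 0 :=
  Balanced.of_add (g := fun a => if a ∈ U then 1 else 0)
    (by convert h₁ using 1; funext a; by_cases a ∈ U <;> simp_all) hU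

theorem sum_add_ite_eq (p : α → Prop) [DecidablePred p] (r : α → ℕ) (a : α) :
    ∑ x with p x, (r x + if x = a then 1 else 0) = ∑ x with p x, r x + if p a then 1 else 0 := by
  simp [sum_add_distrib, sum_ite_eq']

theorem exists_walk_of_imbalance (r : α → ℕ) (v u : β)
    (h : ∀ c, ∑ a with tl a = c, r a + (if c = u then 1 else 0) =
      ∑ a with hd a = c, r a + (if c = v then 1 else 0)) :
    ∃ L, IsWalk tl hd v L u ∧ ∀ a, L.count a ≤ r a := by
  induction hs : ∑ a, r a using Nat.strong_induction_on generalizing r v with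
  | _ s ih =>
  by_cases hvu : v = u
  · exact ⟨[], hvu ▸ .nil v, by simp⟩
  obtain ⟨a, ha, hra⟩ : ∃ a, tl a = v ∧ r a ≠ 0 := by
    have := h v
    simp only [hvu, if_true, if_false] at this
    obtain ⟨a, ha, hra⟩ := exists_ne_zero_of_sum_ne_zero (by omega : ∑ a with tl a = v, r a ≠ 0)
    exact ⟨a, (mem_filter.1 ha).2, hra⟩
  obtain ⟨r, rfl⟩ := exists_eq_add_ite hra
  obtain ⟨L, hL, hLr⟩ := ih (∑ x, r x) (by simp [← hs, sum_add_distrib]) r (hd a)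
    (fun c => by
      have := h c
      rw [sum_add_ite_eq, sum_add_ite_eq] at this
      split_ifs at this ⊢ <;> grind) rfl
  refine ⟨a :: L, ha ▸ hL.cons, fun x => ?_⟩
  have := hLr x
  rw [List.count_cons]
  split_ifs <;> grind

theorem Balanced.exists_closedWalk {r : α → ℕ} (hr : Balanced tl hd r) {d : α} (hrd : r d ≠ 0) :
    ∃ C, IsWalk tl hd (tl d) C (tl d) ∧ d ∈ C ∧ ∀ a, C.count a ≤ r a := by
  obtain ⟨r, rfl⟩ := exists_eq_add_ite hrd
  obtain ⟨L, hL, hLr⟩ := exists_walk_of_imbalance (tl := tl) (hd := hd) r (hd d) (tl d) fun c => by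
    have := hr c
    rw [sum_add_ite_eq, sum_add_ite_eq] at this
    split_ifs at this ⊢ <;> grind
  refine ⟨d :: L, hL.cons, List.mem_cons_self, fun x => ?_⟩
  have := hLr x
  rw [List.count_cons]
  split_ifs <;> grind

theorem sum_count_eq_length (L : List α) : ∑ a, L.count a = L.length := by
  rw [← List.sum_toFinset_count_eq_length]
  exact (sum_subset (subset_univ _) fun a _ ha => List.count_eq_zero.2 (by simpa using ha)).symm

variable {m : α → ℕ} (hbal : Balanced tl hd m) (hm : ∀ a, m a ≠ 0)
  (hconn : ∀ a b, Relation.ReflTransGen (fun x y => hd x = tl y) a b)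
include hbal hm hconn

theorem exists_longer_closedWalk {v : β} {L : List α} (hL : IsWalk tl hd v L v) (hLne : L ≠ [])
    (hLm : ∀ a, L.count a ≤ m a) (hlt : ∃ a, L.count a < m a) :
    ∃ v' L', IsWalk tl hd v' L' v' ∧ (∀ a, L'.count a ≤ m a) ∧ L.length < L'.length := by
  obtain ⟨r, hrm⟩ : ∃ r : α → ℕ, ∀ a, r a + L.count a = m a :=
    ⟨fun a => m a - L.count a, fun a => Nat.sub_add_cancel (hLm a)⟩
  have hr : Balanced tl hd r := Balanced.of_add (g := (L.count ·))
    (by convert hbal using 1; exact funext hrm) hL.balanced_count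
  obtain ⟨a, ha⟩ := hlt
  obtain ⟨b, hb⟩ := List.exists_mem_of_ne_nil L hLne
  -- a spare arc leaving a vertex of `L`: the first spare arc on a path from `b` to `a`
  have key : ∀ y, Relation.ReflTransGen (fun x y => hd x = tl y) b y → r y ≠ 0 →
      ∃ d, r d ≠ 0 ∧ ∃ e ∈ L, tl d = tl e ∨ tl d = hd e := by
    intro y hy
    induction hy with
    | refl => exact fun hrb => ⟨b, hrb, b, hb, Or.inl rfl⟩
    | @tail x y _ hxy ih =>
      intro hry
      by_cases hrx : r x = 0
      · exact ⟨y, hry, x, List.count_pos_iff.1 (by have := hm x; have := hrm x; omega),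
          Or.inr hxy.symm⟩
      · exact ih hrx
  obtain ⟨d, hrd, e, he, hde⟩ := key a (hconn b a) (by have := hrm a; omega)
  obtain ⟨C, hC, hdC, hCr⟩ := hr.exists_closedWalk hrd
  obtain ⟨L', hperm, hL'⟩ := hL.exists_perm_of_mem he hde
  refine ⟨tl d, C ++ L', hC.append hL', fun x => ?_, ?_⟩
  · have := hCr x
    have := hrm x
    rw [List.count_append, hperm.count_eq]
    omega
  · rw [List.length_append, hperm.length_eq]
    have := List.length_pos_of_mem hdC
    omega

theorem exists_closedWalk_count_eq [Nonempty α] :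
    ∃ v L, IsWalk tl hd v L v ∧ ∀ a, L.count a = m a := by
  classical
  have hbound : ∀ L : List α, (∀ a, L.count a ≤ m a) → L.length ≤ ∑ a, m a := fun L hL =>
    sum_count_eq_length L ▸ sum_le_sum fun a _ => hL a
  let P k := ∃ v L, IsWalk tl hd v L v ∧ L ≠ [] ∧ (∀ a, L.count a ≤ m a) ∧ L.length = k
  obtain ⟨a₀⟩ := ‹Nonempty α›
  obtain ⟨C, hC, hC₀, hCm⟩ := hbal.exists_closedWalk (hm a₀)
  obtain ⟨v, L, hL, hLne, hLm, hlen⟩ :=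
    Nat.findGreatest_spec (P := P) (hbound C hCm) ⟨_, C, hC, List.ne_nil_of_mem hC₀, hCm, rfl⟩
  refine ⟨v, L, hL, fun a => (hLm a).antisymm (not_lt.1 fun hlt => ?_)⟩
  obtain ⟨v', L', hL', hL'm, hlt'⟩ :=
    exists_longer_closedWalk hbal hm hconn hL hLne hLm ⟨a, hlt⟩
  have := Nat.le_findGreatest (P := P) (hbound L' hL'm)
    ⟨v', L', hL', List.ne_nil_of_length_pos (by omega), hL'm, rfl⟩
  omega

theorem exists_cyclic_count_eq {ℓ : ℕ} [NeZero ℓ] (hℓ : ∑ a, m a = ℓ) :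
    ∃ w : Fin ℓ → α, (∀ x, hd (w x) = tl (w (x + 1))) ∧ ∀ a, #{x | w x = a} = m a := by
  have : Nonempty α := by
    by_contra h
    rw [not_nonempty_iff] at h
    simp only [univ_eq_empty, sum_empty] at hℓ
    exact NeZero.ne ℓ hℓ.symm
  obtain ⟨v, L, hL, hcount⟩ := exists_closedWalk_count_eq hbal hm hconn
  have hlen : L.length = ℓ := by simp [← sum_count_eq_length, hcount, hℓ]
  let w : List.Vector α ℓ := ⟨L, hlen⟩
  refine ⟨w.get, fun x => ?_, fun a => ?_⟩
  · simp only [w, List.Vector.get, List.get_eq_getElem, Fin.val_cast]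
    rw [hL.hd_getElem]
    split_ifs with h
    · simp only [Fin.val_add_one_of_lt' (hlen ▸ h : x.val + 1 < ℓ)]
    · have hx : x + 1 = 0 := by
        rw [Fin.ext_iff, Fin.val_add, Fin.val_one', Fin.val_zero, Nat.add_mod_mod,
          show x.val + 1 = ℓ by omega, Nat.mod_self]
      simp only [hx, Fin.val_zero]
      exact (hL.getElem_zero (by omega)).symm
  · rw [Fin.card_filter_univ_eq_vector_get_eq_count, ← hcount a]
    rfl

end Euler

theorem exists_invariant_finset_card {γ : Type*} [Fintype γ] [DecidableEq γ] {σ : γ → γ}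
    (hσ : Function.Involutive σ) {x₀ : γ} (hx₀ : σ x₀ = x₀) {s : ℕ}
    (hs : s ≤ Fintype.card γ) : ∃ T : Finset γ, #T = s ∧ ∀ x ∈ T, σ x ∈ T := by
  induction s using Nat.strong_induction_on with
  | _ s ih =>
  match s, ih, hs with
  | 0, _, _ => exact ⟨∅, rfl, by simp⟩
  | 1, _, _ => exact ⟨{x₀}, rfl, by simp [hx₀]⟩
  | s + 2, ih, hs =>
    obtain ⟨T, hTs, hT⟩ := ih s (by omega) (by omega)
    have hTc : ∀ x ∈ Tᶜ, σ x ∈ Tᶜ := by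
      intro x hx
      rw [mem_compl] at hx ⊢
      exact fun hσx => hx (hσ x ▸ hT _ hσx)
    obtain ⟨D, hDT, hD, hDσ⟩ : ∃ D ⊆ Tᶜ, #D = 2 ∧ ∀ x ∈ D, σ x ∈ D := by
      by_cases h : ∀ x ∈ Tᶜ, σ x = x
      · obtain ⟨D, hDT, hD⟩ := exists_subset_card_eq (s := Tᶜ) (n := 2)
          (by rw [card_compl]; omega)
        exact ⟨D, hDT, hD, fun x hx => (h x (hDT hx)).symm ▸ hx⟩
      · obtain ⟨x, hx, hσx⟩ := not_forall₂.1 h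
        refine ⟨{x, σ x}, by simp [insert_subset_iff, hx, hTc x hx], card_pair (Ne.symm hσx), ?_⟩
        simp [hσ x]
    refine ⟨T ∪ D, ?_, fun x hx => ?_⟩
    · rw [card_union_of_disjoint (disjoint_left.2 fun x hx hxD => by simpa [hx] using hDT hxD),
        hTs, hD]
    · rcases mem_union.1 hx with hx | hx
      · exact mem_union_left _ (hT x hx)
      · exact mem_union_right _ (hDσ x hx)

section Words

open Fin.NatCast

variable {ι : Type*} (k : ι → ℕ)

abbrev Word := (i : ι) → Fin (k i + 1) → Bool

abbrev Overlap := (i : ι) → Fin (k i) → Bool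

variable {k}

namespace Word

def init (v : Word k) : Overlap k := fun i => Fin.init (v i)

def tail (v : Word k) : Overlap k := fun i => Fin.tail (v i)

theorem card_eq [Fintype ι] [DecidableEq ι] : Fintype.card (Word k) = 2 ^ ∑ i, (k i + 1) := by
  simp [Fintype.card_pi, prod_pow_eq_pow_sum]

def rotate : Word k ≃ Word k :=
  Equiv.piCongrRight fun i => (finRotate (k i + 1)).symm.arrowCongr (Equiv.refl Bool)

theorem init_rotate (v : Word k) : (rotate v).init = v.tail := by
  funext i j
  simp [rotate, init, tail, Fin.init, Fin.tail, Fin.coeSucc_eq_succ]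

theorem balanced_one [Fintype ι] [DecidableEq ι] : Balanced init tail fun _ : Word k => 1 := by
  intro c
  simp only [sum_const, smul_eq_mul, mul_one]
  exact (card_equiv rotate fun v => by simp [init_rotate]).symm

def ofSeq (s : (i : ι) → ℕ → Bool) (j : ℕ) : Word k := fun i p => s i (p + j)

theorem reflTransGen_ofSeq (s : (i : ι) → ℕ → Bool) (j : ℕ) :
    Relation.ReflTransGen (fun x y : Word k => x.tail = y.init) (ofSeq s 0) (ofSeq s j) := by
  induction j with
  | zero => rfl
  | succ j ih =>
    refine ih.tail (funext fun i => funext fun p => ?_)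
    simp only [ofSeq, tail, init, Fin.tail, Fin.init, Fin.val_succ, Fin.val_castSucc]
    ring_nf

theorem reflTransGen_tail_init [Fintype ι] (a b : Word k) :
    Relation.ReflTransGen (fun x y : Word k => x.tail = y.init) a b := by
  let K := ∑ i, (k i + 1)
  have hK : ∀ i, k i < K := fun i =>
    single_le_sum (f := fun i => k i + 1) (fun _ _ => Nat.zero_le _) (mem_univ i)
  -- the letters of `a`, then arbitrary letters, then those of `b` from position `K` on
  let s : (i : ι) → ℕ → Bool := fun i t =>
    if h : t < k i + 1 then a i ⟨t, h⟩ else b i (t - K : ℕ)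
  have h₀ : ofSeq s 0 = a := by
    funext i p
    simp only [ofSeq, s, add_zero, dif_pos p.isLt]
  have hK : ofSeq s K = b := by
    funext i p
    have := hK i
    simp only [ofSeq, s, dif_neg (show ¬ p.val + K < k i + 1 by omega), Nat.add_sub_cancel,
      Fin.cast_val_eq_self]
  simpa [h₀, hK] using reflTransGen_ofSeq (k := k) s K

theorem apply_eq_apply_add {ℓ : ℕ} [NeZero ℓ] {w : Fin ℓ → Word k}
    (hw : ∀ x, (w x).tail = (w (x + 1)).init) (x : Fin ℓ) (i : ι) (p : Fin (k i + 1)) :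
    w x i p = w (x + (p.val : Fin ℓ)) i 0 := by
  obtain ⟨p, hp⟩ := p
  induction p generalizing x with
  | zero => simp
  | succ p ih =>
    have := congr_fun (congr_fun (hw x) i) ⟨p, by omega⟩
    simp only [tail, init, Fin.tail, Fin.init] at this
    refine this.trans ((ih (x + 1) (by omega)).trans ?_)
    simp [add_assoc, add_comm (1 : Fin ℓ)]

def pattern (P : ι → Bool × Bool) : Word k := fun i p => if Even p.val then (P i).1 else (P i).2

theorem tail_pattern (P : ι → Bool × Bool) :
    (pattern P : Word k).tail = (pattern (Prod.swap ∘ P) : Word k).init := by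
  funext i p
  by_cases hp : Even p.val <;>
    simp [pattern, tail, init, Fin.tail, Fin.init, Nat.even_add_one, hp]

theorem pattern_injective (hk : ∀ i, k i ≠ 0) :
    Function.Injective (pattern : (ι → Bool × Bool) → Word k) := by
  intro P Q h
  funext i
  have h₀ := congr_fun (congr_fun h i) 0
  have h₁ := congr_fun (congr_fun h i) ⟨1, by have := hk i; omega⟩
  simp only [pattern, Fin.val_zero, Even.zero, if_true, Nat.not_even_one, if_false] at h₀ h₁
  exact Prod.ext h₀ h₁

variable [Fintype ι] [DecidableEq ι]

theorem balanced_indicator_iff {U : Finset (Word k)} :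
    Balanced init tail (fun v => if v ∈ U then 1 else 0) ↔
      ∀ c, #{v ∈ U | v.init = c} = #{v ∈ U | v.tail = c} := by
  have h (p : Word k → Prop) [DecidablePred p] :
      ∑ v with p v, (if v ∈ U then 1 else 0) = #{v ∈ U | p v} := by
    rw [sum_boole, Nat.cast_id]
    congr 1
    ext v
    simp [and_comm]
  simp only [Balanced, h]

theorem balanced_image_pattern (hk : ∀ i, k i ≠ 0) {T : Finset (ι → Bool × Bool)}
    (hT : ∀ P ∈ T, Prod.swap ∘ P ∈ T) :
    Balanced init tail (fun v : Word k => if v ∈ T.image pattern then 1 else 0) := by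
  refine balanced_indicator_iff.2 fun c => ?_
  simp only [filter_image, card_image_of_injective _ (pattern_injective hk)]
  have hswap (P : ι → Bool × Bool) : Prod.swap ∘ (Prod.swap ∘ P) = P :=
    funext fun i => Prod.swap_swap _
  refine card_nbij' (Prod.swap ∘ ·) (Prod.swap ∘ ·) (fun P hP => ?_) (fun P hP => ?_)
    (fun P _ => hswap P) (fun P _ => hswap P)
  · simp only [coe_filter, Set.mem_ofPred_eq] at hP ⊢
    exact ⟨hT P hP.1, by rw [tail_pattern, hswap, hP.2]⟩
  · simp only [coe_filter, Set.mem_ofPred_eq] at hP ⊢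
    exact ⟨hT P hP.1, by rw [← tail_pattern, hP.2]⟩

theorem exists_balanced_card_eq (hk : ∀ i, k i ≠ 0) {s : ℕ} (hs : s ≤ 4 ^ Fintype.card ι) :
    ∃ U : Finset (Word k), #U = s ∧ Balanced init tail (fun v => if v ∈ U then 1 else 0) := by
  obtain ⟨T, hTs, hT⟩ := exists_invariant_finset_card (γ := ι → Bool × Bool) (σ := (Prod.swap ∘ ·))
    (fun P => funext fun i => Prod.swap_swap (P i)) (x₀ := fun _ => (false, false)) rfl
    (by simpa using hs)
  exact ⟨T.image pattern, by rw [card_image_of_injective _ (pattern_injective hk), hTs],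
    balanced_image_pattern hk hT⟩

theorem exists_cyclic_count_eq_one_add {U : Finset (Word k)}
    (hU : Balanced init tail (fun v => if v ∈ U then 1 else 0)) {ℓ : ℕ} [NeZero ℓ]
    (hℓ : Fintype.card (Word k) + #U = ℓ) :
    ∃ w : Fin ℓ → Word k, (∀ x, (w x).tail = (w (x + 1)).init) ∧
      ∀ v, #{x | w x = v} = 1 + if v ∈ U then 1 else 0 :=
  Stmt2.exists_cyclic_count_eq (m := fun v => 1 + if v ∈ U then 1 else 0)
    (balanced_one.add hU) (fun _ => by omega) reflTransGen_tail_init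
    (by simp [sum_add_distrib, ← hℓ])

end Word

end Words

section LabelledCycle

open Fin.NatCast

variable {ℓ : ℕ}

theorem resolves_iff_of_lt {m : ℕ} {E : SimpleGraph (Fin ℓ)} {i : Fin ℓ}
    {S : Set (Sym2 (Fin ℓ))} {H : SimpleGraph (Fin m)}
    (hS : ∀ a : Fin m, s(wpos i a, wpos i a) ∉ S) :
    Resolves m E i S H ↔ ∀ a b, a < b →
      (H.Adj a b ↔ E.Adj (wpos i a) (wpos i b) ∨ s(wpos i a, wpos i b) ∈ S) := by
  refine ⟨fun h a b _ => h a b, fun h a b => ?_⟩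
  rcases lt_trichotomy a b with hab | rfl | hab
  · exact h a b hab
  · simp [hS]
  · rw [H.adj_comm, E.adj_comm, Sym2.eq_swap]
    exact h b a hab

variable [NeZero ℓ]

theorem wpos_eq_add {n : ℕ} (i : Fin ℓ) (a : Fin n) : wpos i a = i + (a.val : Fin ℓ) := by
  ext
  simp [wpos, Fin.val_add]

theorem eq_of_add_natCast_eq {x : Fin ℓ} {a b : ℕ} (ha : a < ℓ) (hb : b < ℓ)
    (h : x + (a : Fin ℓ) = x + b) : a = b := by
  have := congrArg Fin.val (add_left_cancel h)
  rwa [Fin.val_natCast, Fin.val_natCast, Nat.mod_eq_of_lt ha, Nat.mod_eq_of_lt hb] at this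

theorem le_of_add_natCast_eq_self {x : Fin ℓ} {a : ℕ} (h : x + (a : Fin ℓ) = x) (ha : a ≠ 0) :
    ℓ ≤ a :=
  Nat.le_of_dvd (Nat.pos_of_ne_zero ha) (Fin.natCast_eq_zero.1 (add_eq_left.1 h))

theorem self_ne_add_natCast (x : Fin ℓ) {a : ℕ} (ha₀ : a ≠ 0) (ha : a < ℓ) :
    x ≠ x + (a : Fin ℓ) :=
  fun h => absurd (le_of_add_natCast_eq_self h.symm ha₀) (not_le.2 ha)

theorem le_of_add_natCast_add_natCast_eq_self {x : Fin ℓ} {a b : ℕ}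
    (h : x + (a : Fin ℓ) + (b : Fin ℓ) = x) (hab : a + b ≠ 0) : ℓ ≤ a + b :=
  le_of_add_natCast_eq_self (by rwa [Nat.cast_add, ← add_assoc]) hab

theorem cyclicDist_add_natCast_le (x : Fin ℓ) {d : ℕ} (hd : d < ℓ) :
    cyclicDist ℓ x (x + (d : Fin ℓ)).val ≤ d ∧ cyclicDist ℓ (x + (d : Fin ℓ)).val x ≤ d := by
  have h : ((x + (d : Fin ℓ)).val + ℓ - x.val) % ℓ = d := by
    have h₁ := congrArg Fin.val (add_sub_cancel_left x (d : Fin ℓ))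
    rw [Fin.val_sub, Fin.val_natCast, Nat.mod_eq_of_lt hd] at h₁
    rwa [add_comm _ ℓ, Nat.sub_add_comm x.isLt.le]
  unfold cyclicDist
  exact ⟨(min_le_right _ _).trans h.le, (min_le_left _ _).trans h.le⟩

variable {n : ℕ}

/-- `short x d` labels the pair `{x, x + (d + 1)}` and `long x` the pair `{x, x + (n + 1)}`:
`some true` is an edge, `some false` a non-edge and `none` a diamond edge. -/
def edgeGraph (short : Fin ℓ → Fin n → Bool) (long : Fin ℓ → Option Bool) :
    SimpleGraph (Fin ℓ) :=
  SimpleGraph.fromRel fun x y =>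
    (∃ d : Fin n, y = x + ((d + 1 : ℕ) : Fin ℓ) ∧ short x d) ∨
      (y = x + ((n + 1 : ℕ) : Fin ℓ) ∧ long x = some true)

def diamondGraph (n : ℕ) (long : Fin ℓ → Option Bool) : SimpleGraph (Fin ℓ) :=
  SimpleGraph.fromRel fun x y => y = x + ((n + 1 : ℕ) : Fin ℓ) ∧ long x = none

variable {short : Fin ℓ → Fin n → Bool} {long : Fin ℓ → Option Bool}

theorem edgeGraph_adj_short (hℓ : 2 * n + 2 ≤ ℓ) (x : Fin ℓ) (d : Fin n) :
    (edgeGraph short long).Adj x (x + ((d + 1 : ℕ) : Fin ℓ)) ↔ short x d := by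
  refine ⟨?_, fun h => ⟨self_ne_add_natCast x (by omega) (by omega),
    Or.inl (Or.inl ⟨d, rfl, h⟩)⟩⟩
  rintro ⟨-, (⟨d', h, hs⟩ | ⟨h, -⟩) | (⟨d', h, -⟩ | ⟨h, -⟩)⟩
  · obtain rfl : d = d' :=
      Fin.ext (by have := eq_of_add_natCast_eq (by omega) (by omega) h; omega)
    exact hs
  · have := eq_of_add_natCast_eq (by omega) (by omega) h
    omega
  · have := le_of_add_natCast_add_natCast_eq_self h.symm (by omega)
    omega
  · have := le_of_add_natCast_add_natCast_eq_self h.symm (by omega)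
    omega

/-- If `ℓ = 2 * n + 2` the pair `{x, x + (n + 1)}` also starts at `x + (n + 1)`, so its two long
labels must agree; `htight` asks them to be `none` then. -/
theorem edgeGraph_adj_long (hℓ : 2 * n + 2 ≤ ℓ) (htight : ℓ = 2 * n + 2 → ∀ x, long x = none)
    (x : Fin ℓ) :
    (edgeGraph short long).Adj x (x + ((n + 1 : ℕ) : Fin ℓ)) ↔ long x = some true := by
  refine ⟨?_, fun h => ⟨self_ne_add_natCast x (by omega) (by omega), Or.inl (Or.inr ⟨rfl, h⟩)⟩⟩
  rintro ⟨-, (⟨d, h, -⟩ | ⟨-, h⟩) | (⟨d, h, -⟩ | ⟨h, hl⟩)⟩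
  · have := eq_of_add_natCast_eq (by omega) (by omega) h
    omega
  · exact h
  · have := le_of_add_natCast_add_natCast_eq_self h.symm (by omega)
    omega
  · have := le_of_add_natCast_add_natCast_eq_self h.symm (by omega)
    simp [htight (by omega)] at hl

theorem not_diamondGraph_adj_short (hℓ : 2 * n + 2 ≤ ℓ) (x : Fin ℓ) (d : Fin n) :
    ¬ (diamondGraph n long).Adj x (x + ((d + 1 : ℕ) : Fin ℓ)) := by
  rintro ⟨-, ⟨h, -⟩ | ⟨h, -⟩⟩
  · have := eq_of_add_natCast_eq (by omega) (by omega) h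
    omega
  · have := le_of_add_natCast_add_natCast_eq_self h.symm (by omega)
    omega

theorem diamondGraph_adj_long (hℓ : 2 * n + 2 ≤ ℓ)
    (htight : ℓ = 2 * n + 2 → ∀ x, long x = none) (x : Fin ℓ) :
    (diamondGraph n long).Adj x (x + ((n + 1 : ℕ) : Fin ℓ)) ↔ long x = none := by
  refine ⟨?_, fun h => ⟨self_ne_add_natCast x (by omega) (by omega), Or.inl ⟨rfl, h⟩⟩⟩
  rintro ⟨-, ⟨-, h⟩ | ⟨h, -⟩⟩
  · exact h
  · have := le_of_add_natCast_add_natCast_eq_self h.symm (by omega)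
    exact htight (by omega) x

theorem edgeGraph_diamondGraph_disjoint (hℓ : 2 * n + 2 ≤ ℓ)
    (htight : ℓ = 2 * n + 2 → ∀ x, long x = none) (a b : Fin ℓ) :
    ¬((edgeGraph short long).Adj a b ∧ (diamondGraph n long).Adj a b) := by
  rintro ⟨hE, -, ⟨rfl, hl⟩ | ⟨rfl, hl⟩⟩
  · simp [(edgeGraph_adj_long hℓ htight a).1 hE] at hl
  · simp [(edgeGraph_adj_long hℓ htight b).1 hE.symm] at hl

theorem cyclicDist_lt_of_adj (hℓ : 2 * n + 2 ≤ ℓ) (a b : Fin ℓ)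
    (h : (edgeGraph short long).Adj a b ∨ (diamondGraph n long).Adj a b) :
    cyclicDist ℓ a b < n + 2 := by
  obtain ⟨δ, hδ, rfl | rfl⟩ : ∃ δ ≤ n + 1, b = a + (δ : Fin ℓ) ∨ a = b + (δ : Fin ℓ) := by
    rcases h with ⟨-, (⟨d, h, -⟩ | ⟨h, -⟩) | (⟨d, h, -⟩ | ⟨h, -⟩)⟩ | ⟨-, ⟨h, -⟩ | ⟨h, -⟩⟩ <;>
      first | exact ⟨_, by omega, Or.inl h⟩ | exact ⟨_, by omega, Or.inr h⟩
  · exact (cyclicDist_add_natCast_le a (by omega)).1.trans_lt (by omega)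
  · exact (cyclicDist_add_natCast_le b (by omega)).2.trans_lt (by omega)

theorem wpos_injective {m : ℕ} (hm : m ≤ ℓ) (i : Fin ℓ) :
    Function.Injective (wpos i : Fin m → Fin ℓ) := fun a b h => by
  rw [wpos_eq_add, wpos_eq_add] at h
  exact Fin.ext (eq_of_add_natCast_eq (by omega) (by omega) h)

theorem wpos_zero (i : Fin ℓ) : wpos i (0 : Fin (n + 2)) = i := by
  simp [wpos_eq_add]

theorem wpos_last (i : Fin ℓ) : wpos i (Fin.last (n + 1)) = i + ((n + 1 : ℕ) : Fin ℓ) := by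
  simp [wpos_eq_add]

theorem wpos_add_of_val_eq {m : ℕ} (i : Fin ℓ) {a b : Fin m} {δ : ℕ} (h : b.val = a + δ) :
    wpos i b = wpos i a + (δ : Fin ℓ) := by
  rw [wpos_eq_add, wpos_eq_add, h, Nat.cast_add, add_assoc]

theorem exists_short_or_long {a b : Fin (n + 2)} (hab : a < b) :
    (∃ d : Fin n, b.val = a + (d + 1)) ∨ (a = 0 ∧ b = Fin.last (n + 1)) := by
  have hab : a.val < b.val := hab
  have hb := b.isLt
  by_cases h : b.val - a.val ≤ n
  · exact Or.inl ⟨⟨b - a - 1, by omega⟩, by simp only; omega⟩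
  · exact Or.inr ⟨Fin.ext (by rw [Fin.val_zero]; omega), Fin.ext (by rw [Fin.val_last]; omega)⟩

def ShortMatches (short : Fin ℓ → Fin n → Bool) (i : Fin ℓ) (H : SimpleGraph (Fin (n + 2))) :
    Prop :=
  ∀ (a b : Fin (n + 2)) (d : Fin n), b.val = a + (d + 1) → (H.Adj a b ↔ short (wpos i a) d)

def longPair (n : ℕ) (i : Fin ℓ) : Sym2 (Fin ℓ) := s(i, i + ((n + 1 : ℕ) : Fin ℓ))

theorem longPair_eq_wpos (i : Fin ℓ) :
    longPair n i = s(wpos i (0 : Fin (n + 2)), wpos i (Fin.last (n + 1))) := by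
  rw [wpos_zero, wpos_last, longPair]

def longSet (n : ℕ) (long : Fin ℓ → Option Bool) (i : Fin ℓ) (H : SimpleGraph (Fin (n + 2))) :
    Set (Sym2 (Fin ℓ)) :=
  {e | e = longPair n i ∧ long i = none ∧ H.Adj 0 (Fin.last (n + 1))}

variable (hℓ : 2 * n + 2 ≤ ℓ) (htight : ℓ = 2 * n + 2 → ∀ x, long x = none)
include hℓ htight

theorem eq_longPair_of_mem_validS {i : Fin ℓ} {S : Set (Sym2 (Fin ℓ))}
    (hS : ValidS (n + 2) (diamondGraph n long) i S) {e : Sym2 (Fin ℓ)} (he : e ∈ S) :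
    e = longPair n i ∧ long i = none := by
  obtain ⟨a, b, rfl, hD⟩ := hS e he
  wlog hab : a < b generalizing a b
  · rcases (not_lt.1 hab).lt_or_eq with hba | rfl
    · rw [Sym2.eq_swap]
      exact this b a hD.symm (by rwa [Sym2.eq_swap]) hba
    · exact absurd hD (SimpleGraph.irrefl _)
  rcases exists_short_or_long hab with ⟨d, hb⟩ | ⟨rfl, rfl⟩
  · rw [wpos_add_of_val_eq i hb] at hD
    exact absurd hD (not_diamondGraph_adj_short hℓ _ d)
  · rw [wpos_zero, wpos_last] at hD ⊢
    exact ⟨rfl, (diamondGraph_adj_long hℓ htight i).1 hD⟩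

theorem resolves_iff_of_subset_longPair {i : Fin ℓ} {S : Set (Sym2 (Fin ℓ))}
    {H : SimpleGraph (Fin (n + 2))} (hS : ∀ e ∈ S, e = longPair n i) :
    Resolves (n + 2) (edgeGraph short long) i S H ↔ ShortMatches short i H ∧
      (H.Adj 0 (Fin.last (n + 1)) ↔ long i = some true ∨ longPair n i ∈ S) := by
  have hinj := wpos_injective (m := n + 2) (by omega) i
  have hdiag (a : Fin (n + 2)) : s(wpos i a, wpos i a) ∉ S := fun ha => by
    have h := hS _ ha
    rw [longPair, Sym2.eq_iff] at h
    refine self_ne_add_natCast i (a := n + 1) (by omega) (by omega) ?_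
    rcases h with ⟨h₁, h₂⟩ | ⟨h₁, h₂⟩
    · exact h₁.symm.trans h₂
    · exact h₂.symm.trans h₁
  have hshort (a b : Fin (n + 2)) (d : Fin n) (hb : b.val = a + (d + 1)) :
      s(wpos i a, wpos i b) ∉ S ∧
        ((edgeGraph short long).Adj (wpos i a) (wpos i b) ↔ short (wpos i a) d) := by
    refine ⟨fun h => ?_, by rw [wpos_add_of_val_eq i hb, edgeGraph_adj_short hℓ]⟩
    have h := hS _ h
    rw [longPair_eq_wpos, Sym2.eq_iff] at h
    rcases h with ⟨h₁, h₂⟩ | ⟨h₁, h₂⟩ <;>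
    · have h₃ := congrArg Fin.val (hinj h₁)
      have h₄ := congrArg Fin.val (hinj h₂)
      simp only [Fin.val_last, Fin.val_zero] at h₃ h₄
      omega
  rw [resolves_iff_of_lt hdiag]
  constructor
  · intro h
    refine ⟨fun a b d hb => ?_, ?_⟩
    · rw [h a b (Fin.lt_def.2 (by omega)), or_iff_left (hshort a b d hb).1, (hshort a b d hb).2]
    · rw [h 0 (Fin.last _) (Fin.lt_def.2 (by simp)), wpos_zero, wpos_last,
        edgeGraph_adj_long hℓ htight]
      rfl
  · rintro ⟨hsm, hlong⟩ a b hab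
    rcases exists_short_or_long hab with ⟨d, hb⟩ | ⟨rfl, rfl⟩
    · rw [hsm a b d hb, or_iff_left (hshort a b d hb).1, (hshort a b d hb).2]
    · rw [hlong, wpos_zero, wpos_last, edgeGraph_adj_long hℓ htight]
      rfl

theorem validS_and_resolves_iff (i : Fin ℓ) (S : Set (Sym2 (Fin ℓ)))
    (H : SimpleGraph (Fin (n + 2))) :
    ValidS (n + 2) (diamondGraph n long) i S ∧ Resolves (n + 2) (edgeGraph short long) i S H ↔
      (ShortMatches short i H ∧ ∀ b ∈ long i, (b = true ↔ H.Adj 0 (Fin.last (n + 1)))) ∧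
        S = longSet n long i H := by
  constructor
  · rintro ⟨hS, hres⟩
    have hS' (e) (he : e ∈ S) := eq_longPair_of_mem_validS hℓ htight hS he
    obtain ⟨hsm, hlong⟩ :=
      (resolves_iff_of_subset_longPair hℓ htight fun e he => (hS' e he).1).1 hres
    refine ⟨⟨hsm, fun b hb => ?_⟩, Set.ext fun e => ⟨fun he => ?_, ?_⟩⟩
    · have hS₀ : longPair n i ∉ S := fun h => by simp [(hS' _ h).2] at hb
      simp_all
    · obtain ⟨rfl, hnone⟩ := hS' e he
      exact ⟨rfl, hnone, hlong.2 (Or.inr he)⟩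
    · rintro ⟨rfl, hnone, hadj⟩
      simpa [hnone] using hlong.1 hadj
  · rintro ⟨⟨hsm, hlong⟩, rfl⟩
    refine ⟨fun e ⟨he, hnone, _⟩ => ⟨0, Fin.last _, by rw [he, longPair_eq_wpos], ?_⟩, ?_⟩
    · rw [wpos_zero, wpos_last]
      exact (diamondGraph_adj_long hℓ htight i).2 hnone
    refine (resolves_iff_of_subset_longPair hℓ htight fun e he => he.1).2 ⟨hsm, ?_⟩
    cases h : long i with
    | none => simp [longSet, h]
    | some b => simp [longSet, h, hlong b h]

theorem isGupcycle_of_existsUnique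
    (h : ∀ H : SimpleGraph (Fin (n + 2)), ∃! i, ShortMatches short i H ∧
      ∀ b ∈ long i, (b = true ↔ H.Adj 0 (Fin.last (n + 1)))) :
    IsGupcycle (n + 2) ℓ (edgeGraph short long) (diamondGraph n long) := by
  refine ⟨edgeGraph_diamondGraph_disjoint hℓ htight, cyclicDist_lt_of_adj hℓ, fun H => ?_⟩
  obtain ⟨i, hi, huniq⟩ := h H
  refine ⟨(i, longSet n long i H), (validS_and_resolves_iff hℓ htight _ _ _).2 ⟨hi, rfl⟩, ?_⟩
  rintro ⟨j, S⟩ hjS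
  obtain ⟨hj, hS⟩ := (validS_and_resolves_iff hℓ htight j S H).1 hjS
  obtain rfl := huniq j hj
  rw [hS]

end LabelledCycle

section RepeatLabel

variable {ℓ : ℕ} {α : Type*} [DecidableEq α]

open Classical in
noncomputable def repeatLabel (w : Fin ℓ → α) (x : Fin ℓ) : Option Bool :=
  if ∃ y ≠ x, w y = w x then some (decide (∃ y < x, w y = w x)) else none

theorem repeatLabel_eq_none {w : Fin ℓ → α} {x : Fin ℓ} (h : #{y | w y = w x} = 1) :
    repeatLabel w x = none := by
  obtain ⟨z, hz⟩ := card_eq_one.1 h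
  have hmem (y : Fin ℓ) : w y = w x ↔ y = z := by simpa using congrArg (y ∈ ·) hz
  rw [repeatLabel, if_neg]
  rintro ⟨y, hyx, hy⟩
  exact hyx (((hmem y).1 hy).trans ((hmem x).1 rfl).symm)

theorem repeatLabel_eq_some {w : Fin ℓ → α} {v : α} {x y : Fin ℓ} (hlt : x < y)
    (hmem : ∀ z, w z = v ↔ z = x ∨ z = y) {z : Fin ℓ} (hz : w z = v) :
    repeatLabel w z = some (decide (z = y)) := by
  rw [repeatLabel, if_pos, hz]
  · simp only [hmem, Option.some.injEq, decide_eq_decide]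
    constructor
    · rintro ⟨z', hz', rfl | rfl⟩ <;> rcases (hmem z).1 hz with rfl | rfl
      · exact absurd hz' (lt_irrefl _)
      · rfl
      · exact absurd (hz'.trans hlt) (lt_irrefl _)
      · exact absurd hz' (lt_irrefl _)
    · rintro rfl
      exact ⟨x, hlt, Or.inl rfl⟩
  · rcases (hmem z).1 hz with rfl | rfl
    · exact ⟨y, hlt.ne', by rw [hz, (hmem y).2 (Or.inr rfl)]⟩
    · exact ⟨x, hlt.ne, by rw [hz, (hmem x).2 (Or.inl rfl)]⟩

theorem existsUnique_repeatLabel {w : Fin ℓ → α}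
    (hw : ∀ v, #{x | w x = v} = 1 ∨ #{x | w x = v} = 2) (v : α) (P : Prop) :
    ∃! x, w x = v ∧ ∀ b ∈ repeatLabel w x, (b = true ↔ P) := by
  rcases hw v with h | h
  · obtain ⟨z, hz⟩ := card_eq_one.1 h
    have hmem (y : Fin ℓ) : w y = v ↔ y = z := by simpa using congrArg (y ∈ ·) hz
    have hzv := (hmem z).2 rfl
    refine ⟨z, ⟨hzv, ?_⟩, fun y hy => (hmem y).1 hy.1⟩
    rw [repeatLabel_eq_none (hzv ▸ h)]
    simp
  obtain ⟨x, y, hxy, hxy'⟩ := card_eq_two.1 h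
  wlog hlt : x < y generalizing x y
  · exact this y x hxy.symm (by rw [hxy', pair_comm]) (lt_of_le_of_ne (not_lt.1 hlt) hxy.symm)
  have hmem (z : Fin ℓ) : w z = v ↔ z = x ∨ z = y := by simpa using congrArg (z ∈ ·) hxy'
  have hlabel (z : Fin ℓ) (hz : w z = v) := repeatLabel_eq_some hlt hmem hz
  by_cases hP : P
  · refine ⟨y, ⟨(hmem y).2 (Or.inr rfl), by simp [hlabel y ((hmem y).2 (Or.inr rfl)), hP]⟩,
      fun z ⟨hz, hzP⟩ => ?_⟩
    simpa [hlabel z hz, hP] using hzP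
  · refine ⟨x, ⟨(hmem x).2 (Or.inl rfl), by simp [hlabel x ((hmem x).2 (Or.inl rfl)), hP, hxy]⟩,
      fun z ⟨hz, hzP⟩ => ?_⟩
    have hzy : z ≠ y := by simpa [hlabel z hz, hP] using hzP
    exact ((hmem z).1 hz).resolve_right hzy

end RepeatLabel

section Construction

open Fin.NatCast

/-- Windows have `n + 2` vertices here; `v d p` records the pair `(p, p + d + 1)` of a window, and
the pair `(0, n + 1)` of its endpoints is not recorded. -/
abbrev WindowWord (n : ℕ) := Word fun d : Fin n => n - d.val

variable {n ℓ : ℕ} [NeZero ℓ]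

open Classical in
noncomputable def windowWord (H : SimpleGraph (Fin (n + 2))) : WindowWord n :=
  fun d p =>
    have : p.val < n - d + 1 := p.isLt
    decide (H.Adj ⟨p, by omega⟩ ⟨p + (d + 1), by omega⟩)

theorem shortMatches_iff {w : Fin ℓ → WindowWord n} (hw : ∀ x, (w x).tail = (w (x + 1)).init)
    (i : Fin ℓ) (H : SimpleGraph (Fin (n + 2))) :
    ShortMatches (fun x d => w x d 0) i H ↔ w i = windowWord H := by
  classical
  have key (a : Fin (n + 2)) (d : Fin n) (ha : a.val < n - d + 1) :
      w (wpos i a) d 0 = w i d ⟨a, ha⟩ := by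
    rw [Word.apply_eq_apply_add hw i d ⟨a, ha⟩, wpos_eq_add]
  constructor
  · intro h
    funext d p
    have hp : p.val < n - d + 1 := p.isLt
    have := h ⟨p, by omega⟩ ⟨p + (d + 1), by omega⟩ d rfl
    dsimp only at this
    rw [key _ _ hp] at this
    rw [windowWord, Bool.eq_iff_iff, decide_eq_true_iff]
    exact this.symm
  · rintro h a b d hb
    dsimp only
    rw [key a d (by omega), h, windowWord, decide_eq_true_iff]
    exact Iff.of_eq (congrArg₂ H.Adj rfl (Fin.ext hb))

theorem isGupcycle_of_cyclic {w : Fin ℓ → WindowWord n}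
    (hw : ∀ x, (w x).tail = (w (x + 1)).init)
    (hcount : ∀ v, #{x | w x = v} = 1 ∨ #{x | w x = v} = 2) (hℓ : 2 * n + 2 ≤ ℓ)
    (htight : ℓ = 2 * n + 2 → ∀ v, #{x | w x = v} = 1) :
    IsGupcycle (n + 2) ℓ (edgeGraph (fun x d => w x d 0) (repeatLabel w))
      (diamondGraph n (repeatLabel w)) :=
  isGupcycle_of_existsUnique hℓ (fun h x => repeatLabel_eq_none (htight h _)) fun H => by
    simpa only [shortMatches_iff hw] using
      existsUnique_repeatLabel hcount (windowWord H) (H.Adj 0 (Fin.last (n + 1)))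

end Construction

section Counting

theorem add_two_choose_two_eq_sum (n : ℕ) :
    (n + 2).choose 2 = ∑ j ∈ range n, (n - j + 1) + 1 := by
  induction n with
  | zero => rfl
  | succ n ih =>
    rw [sum_range_succ', Nat.choose_succ_succ', ih]
    simp only [Nat.add_sub_add_right, Nat.sub_zero, Nat.choose_one_right]
    omega

theorem card_windowWord (n : ℕ) : Fintype.card (WindowWord n) = 2 ^ ((n + 2).choose 2 - 1) := by
  rw [Word.card_eq, Fin.sum_univ_eq_sum_range (fun d => n - d + 1), add_two_choose_two_eq_sum,
    Nat.add_sub_cancel]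

theorem four_pow_le_card_windowWord (n : ℕ) : 4 ^ n ≤ Fintype.card (WindowWord n) := by
  rw [Word.card_eq, show 4 ^ n = 2 ^ (2 * n) by rw [pow_mul]; norm_num]
  refine Nat.pow_le_pow_right (by norm_num) ?_
  calc 2 * n = ∑ _d : Fin n, 2 := by simp [mul_comm]
    _ ≤ _ := sum_le_sum fun d _ => by have := d.isLt; omega

theorem two_mul_add_two_le_card_windowWord {n : ℕ} (hn : 1 ≤ n) :
    2 * n + 2 ≤ Fintype.card (WindowWord n) := by
  refine le_trans ?_ (four_pow_le_card_windowWord n)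
  have := Nat.lt_two_pow_self (n := n)
  rw [show 4 ^ n = (2 ^ n) ^ 2 by rw [← pow_mul, mul_comm, pow_mul]; norm_num]
  nlinarith

theorem exists_balanced_card_add_eq {n ℓ : ℕ}
    (hℓ : (2 ^ ((n + 2).choose 2 - 1) ≤ ℓ ∧
        ℓ ≤ 2 ^ ((n + 2).choose 2 - 1) + 2 ^ (2 * (n + 2) - 4)) ∨
      (2 ^ (n + 2).choose 2 - 2 ^ (2 * (n + 2) - 4) ≤ ℓ ∧ ℓ ≤ 2 ^ (n + 2).choose 2)) :
    ∃ U : Finset (WindowWord n),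
      Balanced Word.init Word.tail (fun v => if v ∈ U then 1 else 0) ∧
        Fintype.card (WindowWord n) + #U = ℓ := by
  have hk : ∀ d : Fin n, n - d.val ≠ 0 := fun d => by have := d.isLt; omega
  have hN := card_windowWord n
  have h4 := four_pow_le_card_windowWord n
  have hP : 2 ^ (2 * (n + 2) - 4) = 4 ^ n := by
    rw [show 2 * (n + 2) - 4 = 2 * n by omega, pow_mul]
    norm_num
  have hC : 2 ^ (n + 2).choose 2 = 2 * 2 ^ ((n + 2).choose 2 - 1) := by
    rw [← pow_succ']
    congr 1
    have := add_two_choose_two_eq_sum n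
    omega
  rw [hC, hP, ← hN] at hℓ
  have hbal := fun s hs => Word.exists_balanced_card_eq (s := s) hk (by rwa [Fintype.card_fin])
  generalize 4 ^ n = P at *
  rcases hℓ with ⟨h₁, h₂⟩ | ⟨h₁, h₂⟩
  · obtain ⟨U, hU, hb⟩ := hbal (ℓ - Fintype.card (WindowWord n)) (by omega)
    exact ⟨U, hb, by omega⟩
  · obtain ⟨U, hU, hb⟩ := hbal (2 * Fintype.card (WindowWord n) - ℓ) (by omega)
    exact ⟨Uᶜ, Balanced.indicator_compl Word.balanced_one hb, by rw [card_compl]; omega⟩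

end Counting

/-- for every `n ≥ 3` and every `ℓ` in the two stated ranges, there is a
gupcycle of length `ℓ` for the labeled graphs on `{1,…,n}`. -/
theorem gupcycle_lengths_labeled (n ℓ : ℕ) (hn : 3 ≤ n)
    (hℓ : (2 ^ (n.choose 2 - 1) ≤ ℓ ∧ ℓ ≤ 2 ^ (n.choose 2 - 1) + 2 ^ (2 * n - 4)) ∨
          (2 ^ (n.choose 2) - 2 ^ (2 * n - 4) ≤ ℓ ∧ ℓ ≤ 2 ^ (n.choose 2))) :
    ∃ E D : SimpleGraph (Fin ℓ), IsGupcycle n ℓ E D := by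
  obtain ⟨n, rfl⟩ : ∃ m, n = m + 2 := ⟨n - 2, by omega⟩
  obtain ⟨U, hU, hUℓ⟩ := exists_balanced_card_add_eq hℓ
  have hcard := two_mul_add_two_le_card_windowWord (n := n) (by omega)
  have : NeZero ℓ := ⟨by omega⟩
  obtain ⟨w, hw, hcount⟩ := Word.exists_cyclic_count_eq_one_add hU hUℓ
  refine ⟨_, _, isGupcycle_of_cyclic hw (fun v => ?_) (by omega) fun h v => ?_⟩
  · rw [hcount]
    split_ifs <;> simp
  · rw [hcount, card_eq_zero.1 (by omega : #U = 0)]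
    simp

end Stmt2
end

section
/- For every n ≥ 3, the number of unordered pairs {H,K} of distinct simple graphs on vertex set {1,…,n−1} such that for all 1 ≤ i < j ≤ n−2 both of the following hold — (vertices i+1 and j+1 are adjacent in H if and only if vertices i and j are adjacent in K) and (vertices i+1 and j+1 are adjacent in K if and only if vertices i and j are adjacent in H) — is exactly 2^(2n−5) − 2^(n−3). (Equivalently, the fully compressed arc digraph for labeled graphs on {1,…,n} contains exactly 2^(2n−5) − 2^(n−3) tours of length 2.) -/
/-!
Iterating the two arc conditions of a two-tour `H ⇄ K`, adjacency of `x < y` in `H` is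
adjacency of `0` and `y - x` in `H` or in `K`, according to the parity of `x`. So the tour is
determined by the first rows of `H` and `K`, and conversely any two rows `A, B` are realised
by `alternatingGraph A B ⇄ alternatingGraph B A`. Ordered two-tours with `H ≠ K` thus
correspond to ordered pairs of distinct subsets of an `(n-2)`-set, and unordered ones are half
as many.
-/

theorem two_mul_ncard_unorderedPairs {α : Type*} [Finite α] {r : α → α → Prop}
    (hr : ∀ ⦃a b⦄, r a b → r b a) :
    2 * {P : Set α | ∃ a b, a ≠ b ∧ P = {a, b} ∧ r a b}.ncard =
      {p : α × α | p.1 ≠ p.2 ∧ r p.1 p.2}.ncard := by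
  classical
  have := Fintype.ofFinite α
  let G : SimpleGraph α :=
    { Adj a b := a ≠ b ∧ r a b, symm := ⟨fun _ _ h => ⟨h.1.symm, hr h.2⟩⟩ }
  have hedges : {P : Set α | ∃ a b, a ≠ b ∧ P = {a, b} ∧ r a b} =
      (fun e : Sym2 α => {x | x ∈ e}) '' G.edgeSet := by
    ext P
    constructor
    · rintro ⟨a, b, hab, rfl, h⟩
      exact ⟨s(a, b), ⟨hab, h⟩, by ext; simp⟩
    · rintro ⟨e, he, rfl⟩
      induction e using Sym2.ind with
      | _ a b => exact ⟨a, b, he.1, by ext; simp, he.2⟩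
  have hinj : Function.Injective fun e : Sym2 α => {x | x ∈ e} :=
    fun e e' h => Sym2.ext fun x => Set.ext_iff.1 h x
  have hdarts : G.Dart ≃ {p : α × α | p.1 ≠ p.2 ∧ r p.1 p.2} :=
    ⟨fun d => ⟨d.toProd, d.adj⟩, fun p => ⟨p.1, p.2⟩, fun _ => rfl, fun _ => rfl⟩
  rw [hedges, Set.ncard_image_of_injective _ hinj, ← SimpleGraph.coe_edgeFinset,
    Set.ncard_coe_finset, ← G.dart_card_eq_twice_card_edges, ← Nat.card_eq_fintype_card,
    Nat.card_congr hdarts, Nat.card_coe_set_eq]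

section
variable {m : ℕ}

def IsCompressedArc (H K : SimpleGraph (Fin (m + 1))) : Prop :=
  H.comap Fin.succ = K.comap Fin.castSucc

def firstRow (H : SimpleGraph (Fin (m + 1))) : Set (Fin m) := {d | H.Adj 0 d.succ}

def alternatingGraph (A B : Set (Fin m)) : SimpleGraph (Fin (m + 1)) :=
  SimpleGraph.fromRel fun x y => ∃ d ∈ (if Even x.val then A else B), y.val = x.val + d.val + 1

def alternatingPair (q : Set (Fin m) × Set (Fin m)) :
    SimpleGraph (Fin (m + 1)) × SimpleGraph (Fin (m + 1)) :=
  (alternatingGraph q.1 q.2, alternatingGraph q.2 q.1)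

variable {H K H' K' : SimpleGraph (Fin (m + 1))}

theorem IsCompressedArc.adj_succ_succ (h : IsCompressedArc H K) (x y : Fin m) :
    H.Adj x.succ y.succ ↔ K.Adj x.castSucc y.castSucc :=
  Iff.of_eq (congrArg (fun G => G.Adj x y) h)

theorem isCompressedArc_iff :
    IsCompressedArc H K ↔ ∀ i j (_ : i < j) (hj : j < m),
      (H.Adj ⟨i + 1, by omega⟩ ⟨j + 1, by omega⟩ ↔
        K.Adj ⟨i, by omega⟩ ⟨j, by omega⟩) := by
  refine ⟨fun h i j hij hj => h.adj_succ_succ ⟨i, hij.trans hj⟩ ⟨j, hj⟩, fun h => ?_⟩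
  ext x y
  simp only [SimpleGraph.comap_adj]
  rcases lt_trichotomy x y with hxy | rfl | hxy
  · exact h x y hxy y.isLt
  · simp
  · rw [H.adj_comm, K.adj_comm]
    exact h y x hxy x.isLt

theorem eq_and_eq_of_firstRow_eq (hHK : IsCompressedArc H K) (hKH : IsCompressedArc K H)
    (hHK' : IsCompressedArc H' K') (hKH' : IsCompressedArc K' H')
    (hH : firstRow H = firstRow H') (hK : firstRow K = firstRow K') : H = H' ∧ K = K' := by
  have row (y) : (H.Adj 0 y ↔ H'.Adj 0 y) ∧ (K.Adj 0 y ↔ K'.Adj 0 y) :=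
    Fin.cases (by simp) (fun d => ⟨Set.ext_iff.1 hH d, Set.ext_iff.1 hK d⟩) y
  have adj (x y) : (H.Adj x y ↔ H'.Adj x y) ∧ (K.Adj x y ↔ K'.Adj x y) := by
    induction x using Fin.induction generalizing y with
    | zero => exact row y
    | succ x ih =>
      cases y using Fin.cases with
      | zero => simpa only [H.adj_comm, H'.adj_comm, K.adj_comm, K'.adj_comm] using row x.succ
      | succ y =>
        rw [hHK.adj_succ_succ, hHK'.adj_succ_succ, hKH.adj_succ_succ, hKH'.adj_succ_succ]
        exact (ih y.castSucc).symm
  constructor <;> ext x y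
  exacts [(adj x y).1, (adj x y).2]

theorem firstRow_alternatingGraph (A B : Set (Fin m)) : firstRow (alternatingGraph A B) = A := by
  ext d
  simp [firstRow, alternatingGraph, Fin.val_inj, eq_comm]

theorem isCompressedArc_alternatingGraph (A B : Set (Fin m)) :
    IsCompressedArc (alternatingGraph A B) (alternatingGraph B A) := by
  have shift (x y : Fin m) :
      (∃ d ∈ (if Even (x.val + 1) then A else B), y.val + 1 = x.val + 1 + d.val + 1) ↔
        ∃ d ∈ (if Even x.val then B else A), y.val = x.val + d.val + 1 := by
    simp only [Nat.even_add_one, ite_not, add_right_comm _ 1, Nat.add_right_cancel_iff]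
  ext x y
  simp only [alternatingGraph, SimpleGraph.comap_adj, SimpleGraph.fromRel_adj, Fin.val_succ,
    Fin.val_castSucc, ne_eq, Fin.succ_inj, Fin.castSucc_inj, shift]

theorem eq_alternatingGraph_firstRow (hHK : IsCompressedArc H K) (hKH : IsCompressedArc K H) :
    H = alternatingGraph (firstRow H) (firstRow K) ∧
      K = alternatingGraph (firstRow K) (firstRow H) :=
  eq_and_eq_of_firstRow_eq hHK hKH (isCompressedArc_alternatingGraph _ _)
    (isCompressedArc_alternatingGraph _ _) (firstRow_alternatingGraph _ _).symm
    (firstRow_alternatingGraph _ _).symm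

theorem alternatingPair_injective : Function.Injective (alternatingPair (m := m)) :=
  fun q q' h => by
    simpa only [alternatingPair, Prod.map_fst, Prod.map_snd, firstRow_alternatingGraph,
      Prod.ext_iff] using congrArg (Prod.map firstRow firstRow) h

end

theorem ncard_setOf_ne_and_isCompressedArc (m : ℕ) :
    {p : SimpleGraph (Fin (m + 1)) × SimpleGraph (Fin (m + 1)) |
      p.1 ≠ p.2 ∧ IsCompressedArc p.1 p.2 ∧ IsCompressedArc p.2 p.1}.ncard =
      2 ^ m * 2 ^ m - 2 ^ m := by
  classical
  have himage : {p : SimpleGraph (Fin (m + 1)) × SimpleGraph (Fin (m + 1)) |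
      p.1 ≠ p.2 ∧ IsCompressedArc p.1 p.2 ∧ IsCompressedArc p.2 p.1} =
      alternatingPair '' (Finset.univ.offDiag : Finset (Set (Fin m) × Set (Fin m))) := by
    ext ⟨H, K⟩
    simp only [alternatingPair, Set.mem_image, Finset.coe_offDiag, Finset.coe_univ,
      Set.mem_offDiag, Set.mem_univ, true_and, Prod.mk.injEq, Prod.exists]
    constructor
    · rintro ⟨hne, hHK, hKH⟩
      obtain ⟨hH, hK⟩ := eq_alternatingGraph_firstRow hHK hKH
      refine ⟨firstRow H, firstRow K, fun hrow => hne ?_, hH.symm, hK.symm⟩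
      calc H = alternatingGraph (firstRow H) (firstRow K) := hH
        _ = alternatingGraph (firstRow K) (firstRow H) := by rw [hrow]
        _ = K := hK.symm
    · rintro ⟨A, B, hAB, rfl, rfl⟩
      refine ⟨fun h => hAB ?_, isCompressedArc_alternatingGraph A B,
        isCompressedArc_alternatingGraph B A⟩
      simpa only [firstRow_alternatingGraph] using congrArg firstRow h
  rw [himage, Set.ncard_image_of_injective _ alternatingPair_injective, Set.ncard_coe_finset,
    Finset.offDiag_card, Finset.card_univ, Fintype.card_set, Fintype.card_fin]

/-- for `n ≥ 3`, there are exactly `2^(2n−5) − 2^(n−3)` unordered pairs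
`{H,K}` of distinct simple graphs on `{1,…,n−1}` (0-indexed via `Fin (n-1)`) such that
the induced subgraph of `H` on the last `n−2` vertices is order-isomorphic to the
induced subgraph of `K` on the first `n−2` vertices, and vice versa; i.e. the fully
compressed arc digraph has exactly `2^(2n−5) − 2^(n−3)` tours of length `2`. -/
theorem compressed_arc_digraph_two_tour_count (n : ℕ) (hn : 3 ≤ n) :
    {P : Set (SimpleGraph (Fin (n - 1))) | ∃ H K : SimpleGraph (Fin (n - 1)),
      H ≠ K ∧ P = {H, K} ∧
      ∀ i j : ℕ, ∀ _hij : i < j, ∀ _hj : j < n - 2,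
        ((H.Adj ⟨i + 1, by omega⟩ ⟨j + 1, by omega⟩ ↔
          K.Adj ⟨i, by omega⟩ ⟨j, by omega⟩) ∧
         (K.Adj ⟨i + 1, by omega⟩ ⟨j + 1, by omega⟩ ↔
          H.Adj ⟨i, by omega⟩ ⟨j, by omega⟩))}.ncard
      = 2 ^ (2 * n - 5) - 2 ^ (n - 3) := by
  obtain ⟨k, rfl⟩ : ∃ k, n = k + 3 := ⟨n - 3, by omega⟩
  have hpairs := two_mul_ncard_unorderedPairs (r := fun H K : SimpleGraph (Fin (k + 2)) =>
    IsCompressedArc H K ∧ IsCompressedArc K H) fun _ _ h => h.symm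
  rw [ncard_setOf_ne_and_isCompressedArc] at hpairs
  simp only [isCompressedArc_iff, ← forall_and] at hpairs
  rw [show 2 * (k + 3) - 5 = 2 * k + 1 by omega, show k + 3 - 3 = k by omega]
  -- `hpairs` matches the goal up to the reductions `k + 3 - 1 = k + 2`, `k + 3 - 2 = k + 1`.
  refine Nat.eq_of_mul_eq_mul_left two_pos (hpairs.trans ?_)
  have h4 : 2 ^ (k + 1) * 2 ^ (k + 1) = 2 * 2 ^ (2 * k + 1) := by ring
  have h2 : 2 ^ (k + 1) = 2 * 2 ^ k := by ring
  omega
end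

section
/- For every n ≥ 3, the number of simple graphs J on vertex set {1,…,n} such that (i) vertices 1 and n are not adjacent, and (ii) for all 1 ≤ i < j ≤ n−2, vertices i and j are adjacent if and only if vertices i+2 and j+2 are adjacent, is exactly 2^(2n−4). -/
/-!
Shift invariance by two forces the adjacency of `i < j` to depend only on the parity of `i` and
on the gap `j - i`: shifting down by an even amount moves every pair to one starting at `0` or `1`.
Conversely any choice of these values, for the `2 (n - 2)` pairs `(p, p + g)` with `p < 2` and
`1 ≤ g ≤ n - 2`, defines a shift-invariant graph. The one remaining pair `(0, n - 1)` is exactly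
the pair that must be non-adjacent.
-/

theorem SimpleGraph.ext_of_adj_of_lt {α : Type*} [LinearOrder α] {G H : SimpleGraph α}
    (h : ∀ a b, a < b → (G.Adj a b ↔ H.Adj a b)) : G = H := by
  ext a b
  rcases lt_trichotomy a b with hab | rfl | hab
  · exact h a b hab
  · simp
  · rw [G.adj_comm, H.adj_comm]
    exact h b a hab

namespace ShiftByTwo

variable {n : ℕ}

/-- Out-of-range vertices are adjacent to nothing. -/
def AdjNat (J : SimpleGraph (Fin n)) (i j : ℕ) : Prop :=
  ∃ (hi : i < n) (hj : j < n), J.Adj ⟨i, hi⟩ ⟨j, hj⟩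

lemma adjNat_iff (J : SimpleGraph (Fin n)) {i j : ℕ} (hi : i < n) (hj : j < n) :
    AdjNat J i j ↔ J.Adj ⟨i, hi⟩ ⟨j, hj⟩ :=
  ⟨fun ⟨_, _, h⟩ => h, fun h => ⟨hi, hj, h⟩⟩

def ShiftInvariant (J : SimpleGraph (Fin n)) : Prop :=
  ∀ i j : ℕ, i < j → j < n - 2 → (AdjNat J i j ↔ AdjNat J (i + 2) (j + 2))

lemma ShiftInvariant.adjNat_add_two_mul {J : SimpleGraph (Fin n)} (hJ : ShiftInvariant J)
    (k : ℕ) {i j : ℕ} (hij : i < j) (hj : j + 2 * k < n) :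
    AdjNat J (i + 2 * k) (j + 2 * k) ↔ AdjNat J i j := by
  induction k with
  | zero => rfl
  | succ k ih =>
    rw [← ih (by omega), hJ (i + 2 * k) (j + 2 * k) (by omega) (by omega)]
    rfl

lemma ShiftInvariant.adjNat_iff_mod_two {J : SimpleGraph (Fin n)} (hJ : ShiftInvariant J)
    {i j : ℕ} (hij : i < j) (hj : j < n) :
    AdjNat J i j ↔ AdjNat J (i % 2) (i % 2 + (j - i)) := by
  have hshift := hJ.adjNat_add_two_mul (i / 2) (i := i % 2) (j := i % 2 + (j - i))
    (by omega) (by omega)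
  rwa [Nat.mod_add_div, show i % 2 + (j - i) + 2 * (i / 2) = j by omega] at hshift

def admissibleGraphs (n : ℕ) : Set (SimpleGraph (Fin n)) :=
  {J | ¬ AdjNat J 0 (n - 1) ∧ ShiftInvariant J}

def profile (J : SimpleGraph (Fin n)) : Fin 2 → Fin (n - 2) → Prop :=
  fun p g => AdjNat J p (p + g + 1)

/-- The adjacency a profile prescribes for `i < j`; false for `(0, n - 1)`, whose gap a profile
does not record. -/
def ProfileAdj (f : Fin 2 → Fin (n - 2) → Prop) (i j : ℕ) : Prop :=
  ∃ h : j - i - 1 < n - 2, f ⟨i % 2, Nat.mod_lt i two_pos⟩ ⟨j - i - 1, h⟩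

lemma profileAdj_add_two (f : Fin 2 → Fin (n - 2) → Prop) (i j : ℕ) :
    ProfileAdj f (i + 2) (j + 2) ↔ ProfileAdj f i j := by
  simp only [ProfileAdj, Nat.add_mod_right, show j + 2 - (i + 2) = j - i by omega]

lemma profileAdj_profile {J : SimpleGraph (Fin n)} (hJ : J ∈ admissibleGraphs n) {i j : ℕ}
    (hij : i < j) (hj : j < n) : ProfileAdj (profile J) i j ↔ AdjNat J i j := by
  obtain ⟨hlast, hshift⟩ := hJ
  by_cases hgap : j - i - 1 < n - 2
  · rw [hshift.adjNat_iff_mod_two hij hj, ProfileAdj, exists_prop_of_true hgap, profile]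
    simp only [show i % 2 + (j - i - 1) + 1 = i % 2 + (j - i) by omega]
  · obtain ⟨rfl, rfl⟩ : i = 0 ∧ j = n - 1 := by omega
    exact iff_of_false (fun ⟨h, _⟩ => hgap h) hlast

def ofProfile (f : Fin 2 → Fin (n - 2) → Prop) : SimpleGraph (Fin n) :=
  SimpleGraph.fromRel fun a b => a < b ∧ ProfileAdj f a b

lemma adjNat_ofProfile (f : Fin 2 → Fin (n - 2) → Prop) {i j : ℕ} (hij : i < j) (hj : j < n) :
    AdjNat (ofProfile f) i j ↔ ProfileAdj f i j := by
  rw [adjNat_iff _ (hij.trans hj) hj, ofProfile, SimpleGraph.fromRel_adj]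
  simp only [ne_eq, Fin.mk.injEq, Fin.mk_lt_mk, hij, true_and, hij.ne, not_false_eq_true,
    or_iff_left_iff_imp, and_imp]
  intro hji
  omega

lemma ofProfile_mem_admissibleGraphs (f : Fin 2 → Fin (n - 2) → Prop) :
    ofProfile f ∈ admissibleGraphs n := by
  refine ⟨?_, fun i j hij hj => ?_⟩
  · rintro ⟨_, _, -, ⟨-, h, -⟩ | ⟨h, -⟩⟩ <;> simp only [Fin.mk_lt_mk] at h <;> omega
  · rw [adjNat_ofProfile f hij (by omega), adjNat_ofProfile f (by omega) (by omega),
      profileAdj_add_two]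

lemma profile_ofProfile (f : Fin 2 → Fin (n - 2) → Prop) : profile (ofProfile f) = f := by
  funext p g
  have := p.isLt
  have := g.isLt
  rw [profile, adjNat_ofProfile f (by omega) (by omega), ProfileAdj,
    exists_prop_of_true (by omega)]
  simp only [Nat.mod_eq_of_lt p.isLt, show (p : ℕ) + g + 1 - p - 1 = g by omega]

lemma ofProfile_profile {J : SimpleGraph (Fin n)} (hJ : J ∈ admissibleGraphs n) :
    ofProfile (profile J) = J := by
  refine SimpleGraph.ext_of_adj_of_lt fun a b hab => ?_
  rw [← adjNat_iff, ← adjNat_iff, adjNat_ofProfile _ hab b.isLt,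
    profileAdj_profile hJ hab b.isLt]

def admissibleGraphsEquivProfile (n : ℕ) :
    admissibleGraphs n ≃ (Fin 2 → Fin (n - 2) → Prop) where
  toFun J := profile J.1
  invFun f := ⟨ofProfile f, ofProfile_mem_admissibleGraphs f⟩
  left_inv J := Subtype.ext (ofProfile_profile J.2)
  right_inv := profile_ofProfile

lemma ncard_admissibleGraphs (n : ℕ) : (admissibleGraphs n).ncard = 2 ^ (2 * (n - 2)) := by
  rw [← Nat.card_coe_set_eq, Nat.card_congr (admissibleGraphsEquivProfile n), Nat.card_fun,
    Nat.card_fun, Nat.card_eq_fintype_card (α := Prop), Fintype.card_prop, Nat.card_fin,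
    Nat.card_fin, ← pow_mul, mul_comm]

end ShiftByTwo

open ShiftByTwo in
/-- for `n ≥ 3`, there are exactly `2^(2n−4)` simple graphs `J` on
`{1,…,n}` (0-indexed via `Fin n`) such that the first and last vertices are not
adjacent and the shift `i ↦ i+2` preserves adjacency, i.e. the induced subgraph on the
first `n−2` vertices is order-isomorphic to the induced subgraph on the last `n−2`
vertices. -/
theorem shift_by_two_count (n : ℕ) (hn : 3 ≤ n) :
    {J : SimpleGraph (Fin n) |
      ¬ J.Adj ⟨0, by omega⟩ ⟨n - 1, by omega⟩ ∧
      ∀ i j : ℕ, ∀ _hij : i < j, ∀ _hj : j < n - 2,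
        (J.Adj ⟨i, by omega⟩ ⟨j, by omega⟩ ↔
         J.Adj ⟨i + 2, by omega⟩ ⟨j + 2, by omega⟩)}.ncard = 2 ^ (2 * n - 4) := by
  convert ncard_admissibleGraphs n using 2
  · ext J
    refine and_congr (not_congr (adjNat_iff J _ _).symm) (forall₄_congr fun i j hij hj => ?_)
    rw [adjNat_iff J, adjNat_iff J]
  · omega
end

section
/- For every n ≥ 3, the map that sends each graph universal cycle G for the permutation graphs on {1,…,n} (a cyclically ordered graph on vertex set Z_(n!), with no edges between vertices at cyclic distance n or more, such that every permutation graph on {1,…,n} is order-isomorphic to exactly one n-window of G) to the sequence (π_i)_{i ∈ Z_(n!)}, where π_i is the unique permutation of {1,…,n} whose permutation graph is order-isomorphic to the n-window of G starting at i, is a bijection onto the set of cyclic sequences (π_i)_{i ∈ Z_(n!)} that list every permutation of {1,…,n} exactly once and in which every consecutive pair (π_i, π_{i+1}) overlaps by n−1. (Such cyclic sequences are exactly the Euler tours of the clustered graph of overlapping n-permutations.) -/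
namespace Stmt13

/-- The permutation graph of `π`: vertices `i < j` are adjacent iff `π i > π j`. -/
def permGraph {n : ℕ} (π : Equiv.Perm (Fin n)) : SimpleGraph (Fin n) where
  Adj i j := (i < j ∧ π j < π i) ∨ (j < i ∧ π i < π j)
  symm := ⟨by intro i j h; tauto⟩
  loopless := ⟨by intro i h; rcases h with ⟨h, _⟩ | ⟨h, _⟩ <;> exact absurd h (lt_irrefl i)⟩

/-- The pair of permutations `(σ, τ)` overlaps by `s`. -/
def POverlap (n s : ℕ) (σ τ : Equiv.Perm (Fin n)) : Prop :=
  ∀ i j : ℕ, ∀ _hi : n - s ≤ i, ∀ _hij : i < j, ∀ hj : j < n,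
    (σ ⟨i, by omega⟩ < σ ⟨j, hj⟩ ↔
     τ ⟨i - (n - s), by omega⟩ < τ ⟨j - (n - s), by omega⟩)

/-- The `n`-window of the cyclically ordered graph `G` on `Z_N` starting at position
`i : ℕ` (read cyclically). -/
def cwindow {N : ℕ} (G : SimpleGraph (Fin N)) (i : ℕ) (n : ℕ) : SimpleGraph (Fin n) where
  Adj a b := ∃ (ha : (i + a.val) % N < N) (hb : (i + b.val) % N < N),
    G.Adj ⟨(i + a.val) % N, ha⟩ ⟨(i + b.val) % N, hb⟩
  symm := ⟨by rintro a b ⟨ha, hb, h⟩; exact ⟨hb, ha, h.symm⟩⟩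
  loopless := ⟨by rintro a ⟨ha, hb, h⟩; exact G.ne_of_adj h rfl⟩

/-- Cyclic distance between positions `a` and `b` in `Z_ℓ`. -/
def cyclicDist (ℓ a b : ℕ) : ℕ := min ((a + ℓ - b) % ℓ) ((b + ℓ - a) % ℓ)

/-- A graph universal cycle for the permutation graphs on `{1,…,n}`: a cyclically
ordered graph on `Z_(n!)` with no edges at cyclic distance `≥ n` in which every
permutation graph is order-isomorphic to (i.e. equals) exactly one `n`-window. -/
def IsPermGucycle (n : ℕ) (G : SimpleGraph (Fin (Nat.factorial n))) : Prop :=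
  (∀ a b : Fin (Nat.factorial n), G.Adj a b → cyclicDist (Nat.factorial n) a.val b.val < n) ∧
  ∀ π : Equiv.Perm (Fin n), ∃! i : Fin (Nat.factorial n), cwindow G i.val n = permGraph π

/-- An Euler tour of the clustered graph of overlapping `n`-permutations: a cyclic
sequence listing every permutation exactly once in which every consecutive pair
overlaps by `n−1`. -/
def IsPermTour (n : ℕ) (p : Fin (Nat.factorial n) → Equiv.Perm (Fin n)) : Prop :=
  Function.Bijective p ∧
  ∀ i : Fin (Nat.factorial n),
    POverlap n (n - 1) (p i) (p ⟨(i.val + 1) % Nat.factorial n, Nat.mod_lt _ i.pos⟩)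

/-!
A universal cycle is read off window by window. Two consecutive windows share `n - 1`
positions, so their permutation graphs agree there after a shift by one, which is exactly the
overlap condition; since `permGraph` is injective and there are `n!` windows and `n!`
permutations, every permutation is read exactly once.

Conversely, a tour `p` is glued into a graph on `Z_(n!)` by laying `permGraph (p i)` over the
window at `i`. Iterating the overlap condition, the graphs laid at `i` and `i + d` agree after a
shift by `d`; as `n! ≥ 2n - 1`, two windows can share a pair of positions only in this way, so the
gluing is consistent and its windows are the `permGraph (p i)`. A graph with no edges at cyclic
distance `≥ n` is determined by its windows, which gives injectivity.
-/

instance (n : ℕ) : NeZero n.factorial := ⟨n.factorial_ne_zero⟩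

lemma two_mul_le_factorial {n : ℕ} (hn : 3 ≤ n) : 2 * n ≤ n.factorial := by
  obtain ⟨m, rfl⟩ : ∃ m, n = m + 1 := ⟨n - 1, by omega⟩
  have hm : 2 ≤ m.factorial := Nat.one_lt_factorial.mpr (by omega)
  rw [Nat.factorial_succ, Nat.mul_comm 2]
  exact Nat.mul_le_mul_left _ hm

lemma permGraph_adj_of_lt {n : ℕ} (σ : Equiv.Perm (Fin n)) {a b : Fin n} (hab : a < b) :
    (permGraph σ).Adj a b ↔ σ b < σ a := by
  simp [permGraph, hab, hab.not_gt]

lemma permGraph_adj_iff_not_lt {n : ℕ} (σ : Equiv.Perm (Fin n)) {a b : Fin n} (hab : a < b) :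
    (permGraph σ).Adj a b ↔ ¬ σ a < σ b := by
  rw [permGraph_adj_of_lt σ hab, not_lt, (σ.injective.ne hab.ne').le_iff_lt]

theorem permGraph_injective {n : ℕ} : Function.Injective (permGraph (n := n)) := by
  intro σ τ h
  have hlt : ∀ a b, τ a < τ b → σ a < σ b := by
    intro a b hτ
    rcases lt_trichotomy a b with hab | rfl | hba
    · refine (σ.injective.ne hab.ne).lt_or_gt.resolve_right fun hσ => ?_
      have hadj : (permGraph τ).Adj a b := h ▸ (permGraph_adj_of_lt σ hab).2 hσ
      exact lt_asymm hτ ((permGraph_adj_of_lt τ hab).1 hadj)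
    · exact absurd hτ (lt_irrefl _)
    · exact (permGraph_adj_of_lt σ hba).1 (h ▸ (permGraph_adj_of_lt τ hba).2 hτ)
  have hid : ⇑(τ.symm.trans σ) = id :=
    StrictMono.eq_id fun x y hxy => hlt _ _ (by simpa using hxy)
  exact Equiv.ext fun x => by simpa using congrFun hid (τ x)

/-- `H` is `G` seen from `d` positions further right: the two agree on their common positions. -/
def ShiftAgree {n : ℕ} (d : ℕ) (G H : SimpleGraph (Fin n)) : Prop :=
  ∀ a b (ha : a + d < n) (hb : b + d < n),
    (G.Adj ⟨a + d, ha⟩ ⟨b + d, hb⟩ ↔ H.Adj ⟨a, by omega⟩ ⟨b, by omega⟩)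

namespace ShiftAgree

variable {n d e : ℕ} {G H K : SimpleGraph (Fin n)}

lemma zero (G : SimpleGraph (Fin n)) : ShiftAgree 0 G G := fun _ _ _ _ => Iff.rfl

lemma trans (h₁ : ShiftAgree d G H) (h₂ : ShiftAgree e H K) : ShiftAgree (e + d) G K := by
  intro a b ha hb
  have h := h₁ (a + e) (b + e) (by omega) (by omega)
  simp only [Nat.add_assoc] at h
  exact h.trans (h₂ a b _ _)

lemma of_lt
    (h : ∀ a b (hab : a < b) (ha : a + d < n) (hb : b + d < n),
      (G.Adj ⟨a + d, ha⟩ ⟨b + d, hb⟩ ↔ H.Adj ⟨a, by omega⟩ ⟨b, by omega⟩)) :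
    ShiftAgree d G H := by
  intro a b ha hb
  rcases lt_trichotomy a b with hab | rfl | hba
  · exact h a b hab ha hb
  · simp
  · rw [G.adj_comm, H.adj_comm]
    exact h b a hba hb ha

end ShiftAgree

theorem pOverlap_iff_shiftAgree {n : ℕ} (σ τ : Equiv.Perm (Fin n)) :
    POverlap n (n - 1) σ τ ↔ ShiftAgree 1 (permGraph σ) (permGraph τ) := by
  constructor
  · refine fun h => ShiftAgree.of_lt fun a b hab ha hb => ?_
    have hσ := h (a + 1) (b + 1) (by omega) (by omega) hb
    simp only [show n - (n - 1) = 1 by omega, Nat.add_sub_cancel] at hσ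
    rw [permGraph_adj_iff_not_lt σ (Fin.mk_lt_mk.2 (by omega)),
      permGraph_adj_iff_not_lt τ (Fin.mk_lt_mk.2 hab)]
    exact not_congr hσ
  · intro h i j hi hij hj
    obtain ⟨a, rfl⟩ : ∃ a, i = a + 1 := ⟨i - 1, by omega⟩
    obtain ⟨b, rfl⟩ : ∃ b, j = b + 1 := ⟨j - 1, by omega⟩
    have hσ := h a b (by omega) hj
    rw [permGraph_adj_iff_not_lt σ (Fin.mk_lt_mk.2 hij),
      permGraph_adj_iff_not_lt τ (Fin.mk_lt_mk.2 (by omega))] at hσ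
    simp only [show n - (n - 1) = 1 by omega, Nat.add_sub_cancel]
    exact not_iff_not.1 hσ

lemma cyclicDist_comm {N : ℕ} (u v : Fin N) : cyclicDist N u v = cyclicDist N v u := min_comm _ _

lemma cyclicDist_eq_min {N : ℕ} (u v : Fin N) : cyclicDist N u v = min (u - v).val (v - u).val := by
  simp only [cyclicDist, Fin.val_sub]
  congr 2 <;> omega

section Windows

variable {N n : ℕ} [NeZero N]

lemma cwindow_adj (G : SimpleGraph (Fin N)) (i : ℕ) (a b : Fin n) :
    (cwindow G i n).Adj a b ↔ G.Adj (Fin.ofNat N (i + a)) (Fin.ofNat N (i + b)) :=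
  ⟨fun ⟨_, _, h⟩ => h, fun h => ⟨_, _, h⟩⟩

lemma cwindow_mod (G : SimpleGraph (Fin N)) (i : ℕ) : cwindow G (i % N) n = cwindow G i n := by
  ext a b
  simp only [cwindow_adj, Fin.ofNat, Nat.mod_add_mod]

lemma shiftAgree_cwindow (G : SimpleGraph (Fin N)) (i d : ℕ) :
    ShiftAgree d (cwindow G i n) (cwindow G (i + d) n) := by
  intro a b ha hb
  simp only [cwindow_adj, ← Nat.add_assoc, Nat.add_right_comm i _ d]

lemma cwindow_adj_sub_iff (G : SimpleGraph (Fin N)) {u v : Fin N} (h : (v - u).val < n) :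
    (cwindow G u n).Adj ⟨0, by omega⟩ ⟨(v - u).val, h⟩ ↔ G.Adj u v := by
  have hv : Fin.ofNat N (u + (v - u).val) = v := by
    rw [← Fin.add_ofNat, Fin.ofNat_val_eq_self, add_sub_cancel]
  simp only [cwindow_adj, Nat.add_zero, Fin.ofNat_val_eq_self, hv]

lemma le_of_cwindow_eq {G G' : SimpleGraph (Fin N)}
    (hG : ∀ u v, G.Adj u v → cyclicDist N u v < n)
    (h : ∀ i : Fin N, cwindow G i n = cwindow G' i n) : G ≤ G' := by
  have key : ∀ u v : Fin N, (v - u).val < n → G.Adj u v → G'.Adj u v := fun u v huv hadj =>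
    (cwindow_adj_sub_iff G' huv).1 (h u ▸ (cwindow_adj_sub_iff G huv).2 hadj)
  intro u v hadj
  rcases min_lt_iff.1 (cyclicDist_eq_min u v ▸ hG u v hadj) with huv | huv
  · exact (key v u huv hadj.symm).symm
  · exact key u v huv hadj

lemma eq_of_cwindow_eq {G G' : SimpleGraph (Fin N)}
    (hG : ∀ u v, G.Adj u v → cyclicDist N u v < n) (hG' : ∀ u v, G'.Adj u v → cyclicDist N u v < n)
    (h : ∀ i : Fin N, cwindow G i n = cwindow G' i n) : G = G' :=
  le_antisymm (le_of_cwindow_eq hG h) (le_of_cwindow_eq hG' fun i => (h i).symm)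

lemma shiftAgree_iterate {H : Fin N → SimpleGraph (Fin n)}
    (h : ∀ i : Fin N, ShiftAgree 1 (H i) (H (Fin.ofNat N (i + 1)))) :
    ∀ (d : ℕ) (i : Fin N), ShiftAgree d (H i) (H (Fin.ofNat N (i + d)))
  | 0, i => by simpa using ShiftAgree.zero (H i)
  | d + 1, i => by
    have hi : Fin.ofNat N ((Fin.ofNat N (i + 1)).val + d) = Fin.ofNat N (i + (d + 1)) := by
      simp only [Fin.ofNat, Nat.mod_add_mod, Nat.add_assoc, Nat.add_comm 1 d]
    simpa only [hi] using (h i).trans (shiftAgree_iterate h d _)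

end Windows

lemma modEq_shift {N i j a b a' b' : ℕ} (hle : a' ≤ a) (hb : b < N) (hb' : b' + (a - a') < N)
    (hia : i + a ≡ j + a' [MOD N]) (hib : i + b ≡ j + b' [MOD N]) :
    i + (a - a') ≡ j [MOD N] ∧ b = b' + (a - a') := by
  have hij : i + (a - a') ≡ j [MOD N] :=
    Nat.ModEq.add_right_cancel' a' (by rwa [Nat.add_assoc, Nat.sub_add_cancel hle])
  refine ⟨hij, Nat.ModEq.eq_of_lt_of_lt (Nat.ModEq.add_left_cancel' i ?_) hb hb'⟩
  calc i + b ≡ j + b' [MOD N] := hib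
    _ ≡ i + (a - a') + b' [MOD N] := hij.symm.add_right b'
    _ = i + (b' + (a - a')) := by omega

section Gluing

variable {N n : ℕ} [NeZero N]

lemma ofNat_eq_ofNat_iff_modEq {x y : ℕ} : Fin.ofNat N x = Fin.ofNat N y ↔ x ≡ y [MOD N] :=
  Fin.ext_iff

def gluedGraph (H : Fin N → SimpleGraph (Fin n)) : SimpleGraph (Fin N) :=
  SimpleGraph.fromRel fun u v => ∃ (i : Fin N) (a b : Fin n),
    (H i).Adj a b ∧ Fin.ofNat N (i + a) = u ∧ Fin.ofNat N (i + b) = v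

lemma adj_iff_of_ofNat_eq {H : Fin N → SimpleGraph (Fin n)} (hN : 2 * n ≤ N + 1)
    (hH : ∀ (d : ℕ) (i : Fin N), ShiftAgree d (H i) (H (Fin.ofNat N (i + d))))
    {i j : Fin N} {a b a' b' : Fin n} (ha : Fin.ofNat N (i + a) = Fin.ofNat N (j + a'))
    (hb : Fin.ofNat N (i + b) = Fin.ofNat N (j + b')) : (H i).Adj a b ↔ (H j).Adj a' b' := by
  wlog hle : a'.val ≤ a.val generalizing i j a b a' b'
  · exact (this ha.symm hb.symm (by omega)).symm
  obtain ⟨hij, hbb⟩ := modEq_shift hle (by omega) (by omega)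
    (ofNat_eq_ofNat_iff_modEq.1 ha) (ofNat_eq_ofNat_iff_modEq.1 hb)
  have h := hH (a - a') i a' b' (by omega) (by omega)
  rwa [show Fin.ofNat N (i + (a - a')) = j from Fin.ext (Nat.mod_eq_of_modEq hij j.isLt),
    show (⟨a' + (a - a'), _⟩ : Fin n) = a from Fin.ext (by simp; omega),
    show (⟨b' + (a - a'), _⟩ : Fin n) = b from Fin.ext hbb.symm] at h

lemma cwindow_gluedGraph {H : Fin N → SimpleGraph (Fin n)} (hN : 2 * n ≤ N + 1)
    (hH : ∀ (d : ℕ) (i : Fin N), ShiftAgree d (H i) (H (Fin.ofNat N (i + d)))) (i : Fin N) :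
    cwindow (gluedGraph H) i n = H i := by
  ext a b
  simp only [cwindow_adj, gluedGraph, SimpleGraph.fromRel_adj]
  constructor
  · rintro ⟨-, ⟨j, a', b', hadj, ha, hb⟩ | ⟨j, b', a', hadj, hb, ha⟩⟩
    · exact (adj_iff_of_ofNat_eq hN hH ha hb).1 hadj
    · exact (adj_iff_of_ofNat_eq hN hH ha hb).1 hadj.symm
  · intro hadj
    refine ⟨fun hab => hadj.ne (Fin.ext ?_), Or.inl ⟨i, a, b, hadj, rfl, rfl⟩⟩
    exact Nat.ModEq.eq_of_lt_of_lt (Nat.ModEq.add_left_cancel' i (ofNat_eq_ofNat_iff_modEq.1 hab))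
      (by omega) (by omega)

lemma cyclicDist_ofNat_lt (i : ℕ) {a b : Fin n} (hne : a ≠ b) :
    cyclicDist N (Fin.ofNat N (i + a)) (Fin.ofNat N (i + b)) < n := by
  wlog hab : a < b generalizing a b
  · rw [cyclicDist_comm]
    exact this hne.symm (hne.symm.lt_of_le (not_lt.1 hab))
  have hsub : Fin.ofNat N (i + b) - Fin.ofNat N (i + a) = Fin.ofNat N (b - a) := by
    rw [sub_eq_iff_eq_add', Fin.add_ofNat, ofNat_eq_ofNat_iff_modEq, Fin.val_ofNat,
      show i + b = i + a + (b - a) by omega]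
    exact ((Nat.mod_modEq _ _).add_right _).symm
  rw [cyclicDist_eq_min, hsub]
  exact (min_le_right _ _).trans_lt ((Nat.mod_le _ _).trans_lt (by omega))

lemma cyclicDist_lt_of_gluedGraph_adj {H : Fin N → SimpleGraph (Fin n)} {u v : Fin N}
    (h : (gluedGraph H).Adj u v) : cyclicDist N u v < n := by
  obtain ⟨-, ⟨i, a, b, hadj, rfl, rfl⟩ | ⟨i, a, b, hadj, rfl, rfl⟩⟩ := h
  · exact cyclicDist_ofNat_lt i hadj.ne
  · rw [cyclicDist_comm]
    exact cyclicDist_ofNat_lt i hadj.ne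

end Gluing

theorem IsPermGucycle.exists_isPermTour {n : ℕ} {G : SimpleGraph (Fin n.factorial)}
    (hG : IsPermGucycle n G) :
    ∃ p, IsPermTour n p ∧ ∀ i, permGraph (p i) = cwindow G i.val n := by
  choose f hf using fun π => (hG.2 π).exists
  have hf_inj : f.Injective := fun σ τ hστ => permGraph_injective (by rw [← hf σ, ← hf τ, hστ])
  have hf_bij : f.Bijective := by
    rw [Fintype.bijective_iff_injective_and_card]
    simp [hf_inj, Fintype.card_perm]
  let e := Equiv.ofBijective f hf_bij
  have hwin : ∀ i, permGraph (e.symm i) = cwindow G i.val n := fun i => by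
    rw [← hf, Equiv.ofBijective_apply_symm_apply f hf_bij]
  refine ⟨e.symm, ⟨e.symm.bijective, fun i => ?_⟩, hwin⟩
  rw [pOverlap_iff_shiftAgree, hwin, hwin, cwindow_mod]
  exact shiftAgree_cwindow G i 1

section Tour

variable {n : ℕ} {p : Fin n.factorial → Equiv.Perm (Fin n)}

theorem IsPermTour.cwindow_gluedGraph (hn : 3 ≤ n) (hp : IsPermTour n p) (i : Fin n.factorial) :
    cwindow (gluedGraph (permGraph ∘ p)) i n = permGraph (p i) :=
  Stmt13.cwindow_gluedGraph (by linarith [two_mul_le_factorial hn])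
    (shiftAgree_iterate fun i => (pOverlap_iff_shiftAgree _ _).1 (hp.2 i)) i

theorem IsPermTour.isPermGucycle_gluedGraph (hn : 3 ≤ n) (hp : IsPermTour n p) :
    IsPermGucycle n (gluedGraph (permGraph ∘ p)) := by
  refine ⟨fun _ _ => cyclicDist_lt_of_gluedGraph_adj, fun π => ?_⟩
  obtain ⟨i, rfl⟩ := hp.1.2 π
  refine ⟨i, hp.cwindow_gluedGraph hn i, fun j hj => hp.1.1 (permGraph_injective ?_)⟩
  rwa [← hp.cwindow_gluedGraph hn j]

end Tour

/-- for `n ≥ 3`, the map reading off the permutations from the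
`n`-windows is a bijection from the set of graph universal cycles for permutation
graphs on `{1,…,n}` onto the set of Euler tours of the clustered graph of overlapping
`n`-permutations, preserving the order in which `S_n` is covered. -/
theorem perm_gucycle_tour_bijection (n : ℕ) (hn : 3 ≤ n) :
    ∃ F : {G : SimpleGraph (Fin (Nat.factorial n)) // IsPermGucycle n G} →
          {p : Fin (Nat.factorial n) → Equiv.Perm (Fin n) // IsPermTour n p},
      Function.Bijective F ∧
      ∀ (G : {G : SimpleGraph (Fin (Nat.factorial n)) // IsPermGucycle n G})
        (i : Fin (Nat.factorial n)),
        permGraph ((F G).val i) = cwindow G.val i.val n := by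
  have hex : ∀ G : {G : SimpleGraph (Fin n.factorial) // IsPermGucycle n G},
      ∃ p : {p : Fin n.factorial → Equiv.Perm (Fin n) // IsPermTour n p},
        ∀ i, permGraph (p.val i) = cwindow G.val i.val n := fun G =>
    let ⟨p, hp, hwin⟩ := G.2.exists_isPermTour
    ⟨⟨p, hp⟩, hwin⟩
  choose F hF using hex
  refine ⟨F, ⟨fun G G' hGG' => ?_, fun p => ?_⟩, hF⟩
  · exact Subtype.ext (eq_of_cwindow_eq G.2.1 G'.2.1 fun i => by rw [← hF, ← hF, hGG'])
  · refine ⟨⟨_, p.2.isPermGucycle_gluedGraph hn⟩, Subtype.ext (funext fun i => ?_)⟩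
    exact permGraph_injective ((hF _ i).trans (p.2.cwindow_gluedGraph hn i))

end Stmt13
end
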